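/- arXiv:cs/0106001 — 8 statements merged into one kernel-verified Lean document; each statement's English description precedes it below -/
import Mathlib

section
/- For all integers n, L, k with n ≥ k ≥ 1 and L ≥ 0, P_{n,L}(k-XOR-SAT) ≥ 1 / E_{L,k}(Y). -/
open Finset Filter

attribute [local instance] Classical.propDecidable

/-- A `k`-XOR-clause over `n` variables: a `k`-element set of variables
together with a right-hand side in `GF(2) = ZMod 2`. -/
abbrev Clause (n k : ℕ) := {S : Finset (Fin n) // S.card = k} × ZMod 2

/-- A formula in `Ω(n,L,k)`: an ordered `L`-tuple of `k`-XOR-clauses. -/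
abbrev Formula (n L k : ℕ) := Fin L → Clause n k

/-- A formula is satisfiable iff some assignment satisfies every clause. -/
def Satisfiable {n L k : ℕ} (F : Formula n L k) : Prop :=
  ∃ I : Fin n → ZMod 2, ∀ i : Fin L, ∑ j ∈ (F i).1.1, I j = (F i).2

/-- The number of satisfiable formulas in `Ω(n,L,k)`. -/
noncomputable def numSat (n L k : ℕ) : ℕ :=
  Nat.card {F : Formula n L k // Satisfiable F}

/-- `P_{n,L}(k-XOR-SAT)`: the fraction of satisfiable formulas in `Ω(n,L,k)`,
whose total number is `(2 * C(n,k))^L`. -/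
noncomputable def Psat (n L k : ℕ) : ℝ :=
  (numSat n L k : ℝ) / (2 * (n.choose k : ℝ)) ^ L

/-- `M_{L,n,k}`: the set of `L × n` matrices over `ZMod 2` with exactly `k`
nonzero entries in each row. -/
noncomputable def Mset (L n k : ℕ) : Finset (Matrix (Fin L) (Fin n) (ZMod 2)) :=
  Finset.univ.filter fun A =>
    ∀ i : Fin L, (Finset.univ.filter fun j : Fin n => A i j ≠ 0).card = k

/-- `Y(A)`: the number of vectors in the kernel of the transpose of `A`. -/
noncomputable def Ycount {L n : ℕ} (A : Matrix (Fin L) (Fin n) (ZMod 2)) : ℕ :=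
  Nat.card {u : Fin L → ZMod 2 // Matrix.vecMul u A = 0}

/-- `E_{L,k}(Y)`: the expectation of `Y` over a uniformly random `A ∈ M_{L,n,k}`
(there are `C(n,k)^L` such matrices). -/
noncomputable def EY (n L k : ℕ) : ℝ :=
  (∑ A ∈ Mset L n k, (Ycount A : ℝ)) / (n.choose k : ℝ) ^ L

/-- `P_(r)`: the fraction of matrices in `M_{L,n,k}` of rank `r`. -/
noncomputable def Prank (n L k r : ℕ) : ℝ :=
  (((Mset L n k).filter fun A => A.rank = r).card : ℝ) / (n.choose k : ℝ) ^ L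

/- ======================= Auxiliary material ======================= -/

namespace XorSatAux

variable {n L k : ℕ}

lemma zmod2_eq_one {a : ZMod 2} (h : a ≠ 0) : a = 1 := by
  revert h; revert a; decide

/-- The matrix of a formula. -/
def matF (F : Formula n L k) : Matrix (Fin L) (Fin n) (ZMod 2) :=
  fun i j => if j ∈ (F i).1.1 then 1 else 0

/-- The right-hand-side vector of a formula. -/
def bF (F : Formula n L k) : Fin L → ZMod 2 := fun i => (F i).2

lemma row_filter (F : Formula n L k) (i : Fin L) :
    (Finset.univ.filter fun j : Fin n => matF F i j ≠ 0) = (F i).1.1 := by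
  ext j
  simp [matF]

lemma matF_mem (F : Formula n L k) : matF F ∈ Mset L n k := by
  simp only [Mset, Finset.mem_filter, Finset.mem_univ, true_and]
  intro i
  rw [row_filter]
  exact (F i).1.2

lemma mulVec_matF (F : Formula n L k) (I : Fin n → ZMod 2) (i : Fin L) :
    (matF F).mulVec I i = ∑ j ∈ (F i).1.1, I j := by
  simp [Matrix.mulVec, dotProduct, matF, ite_mul, Finset.sum_ite_mem]

lemma sat_iff (F : Formula n L k) :
    Satisfiable F ↔ ∃ I, (matF F).mulVec I = bF F := by
  refine exists_congr fun I => ?_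
  rw [funext_iff]
  exact forall_congr' fun i => by rw [mulVec_matF]; rfl

/-- The number of satisfiable right-hand sides for a given matrix. -/
noncomputable def satCount (A : Matrix (Fin L) (Fin n) (ZMod 2)) : ℕ :=
  Nat.card {b : Fin L → ZMod 2 // ∃ x, A.mulVec x = b}

lemma satCount_eq_card (A : Matrix (Fin L) (Fin n) (ZMod 2)) :
    satCount A = (Finset.univ.filter fun b : Fin L → ZMod 2 => ∃ x, A.mulVec x = b).card := by
  rw [satCount, Nat.card_eq_fintype_card]
  convert Fintype.card_subtype _

lemma fst_eq {F : Formula n L k} {A : Matrix (Fin L) (Fin n) (ZMod 2)}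
    (h : matF F = A) (i : Fin L) :
    (F i).1.1 = Finset.univ.filter fun j : Fin n => A i j ≠ 0 := by
  rw [← h, row_filter]

lemma numSat_eq (n L k : ℕ) :
    numSat n L k = ∑ A ∈ Mset L n k, satCount A := by
  have h1 : numSat n L k = (Finset.univ.filter fun F : Formula n L k => Satisfiable F).card := by
    rw [numSat, Nat.card_eq_fintype_card]
    convert Fintype.card_subtype _
  rw [h1, Finset.card_eq_sum_card_fiberwise (f := matF) (t := Mset L n k)
    (fun F _ => matF_mem F)]
  refine Finset.sum_congr rfl fun A hA => ?_
  rw [satCount_eq_card]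
  refine Finset.card_bij (fun F _ => bF F) ?_ ?_ ?_
  · intro F hF
    simp only [Finset.mem_filter, Finset.mem_univ, true_and] at hF ⊢
    obtain ⟨hsat, hm⟩ := hF
    obtain ⟨I, hI⟩ := (sat_iff F).mp hsat
    exact ⟨I, by rw [← hm]; exact hI⟩
  · intro F hF F' hF' hb
    simp only [Finset.mem_filter, Finset.mem_univ, true_and] at hF hF'
    funext i
    refine Prod.ext (Subtype.ext ?_) ?_
    · rw [fst_eq hF.2 i, fst_eq hF'.2 i]
    · exact congrFun hb i
  · intro b hb
    simp only [Mset, Finset.mem_filter, Finset.mem_univ, true_and] at hA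
    simp only [Finset.mem_filter, Finset.mem_univ, true_and] at hb
    refine ⟨fun i => (⟨Finset.univ.filter fun j : Fin n => A i j ≠ 0, hA i⟩, b i), ?_, rfl⟩
    have hm : matF (fun i => ((⟨Finset.univ.filter fun j : Fin n => A i j ≠ 0, hA i⟩,
        b i) : Clause n k)) = A := by
      funext i j
      by_cases h : A i j = 0
      · simp [matF, h]
      · simp [matF, h, zmod2_eq_one h]
    simp only [Finset.mem_filter, Finset.mem_univ, true_and]
    refine ⟨?_, hm⟩
    rw [sat_iff, hm]
    exact hb

lemma card_submodule {m : ℕ} (p : Submodule (ZMod 2) (Fin m → ZMod 2)) :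
    Nat.card p = 2 ^ Module.finrank (ZMod 2) p := by
  have : Fintype p := Fintype.ofFinite _
  rw [Nat.card_eq_fintype_card, Module.card_eq_pow_finrank (K := ZMod 2), ZMod.card]

lemma satCount_eq (A : Matrix (Fin L) (Fin n) (ZMod 2)) :
    satCount A = 2 ^ A.rank := by
  have h : satCount A = Nat.card (LinearMap.range A.mulVecLin) :=
    Nat.card_congr (Equiv.subtypeEquivRight fun b => by
      simp [LinearMap.mem_range, Matrix.mulVecLin_apply])
  rw [h, card_submodule, Matrix.rank]

lemma Ycount_eq (A : Matrix (Fin L) (Fin n) (ZMod 2)) :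
    Ycount A = 2 ^ Module.finrank (ZMod 2) (LinearMap.ker (Matrix.mulVecLin A.transpose)) := by
  have h : Ycount A = Nat.card (LinearMap.ker (Matrix.mulVecLin A.transpose)) :=
    Nat.card_congr (Equiv.subtypeEquivRight fun u => by
      rw [LinearMap.mem_ker, Matrix.mulVecLin_apply, ← Matrix.vecMul_transpose,
        Matrix.transpose_transpose])
  rw [h, card_submodule]

lemma prod_eq (A : Matrix (Fin L) (Fin n) (ZMod 2)) :
    satCount A * Ycount A = 2 ^ L := by
  rw [satCount_eq, Ycount_eq, ← pow_add]
  congr 1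
  have h1 : A.rank = A.transpose.rank := (Matrix.rank_transpose A).symm
  have h2 := LinearMap.finrank_range_add_finrank_ker (Matrix.mulVecLin A.transpose)
  rw [Module.finrank_fin_fun] at h2
  rw [h1]
  rw [show A.transpose.rank = Module.finrank (ZMod 2) (LinearMap.range (Matrix.mulVecLin A.transpose)) from rfl]
  exact h2

lemma card_rowset :
    Nat.card {v : Fin n → ZMod 2 // (Finset.univ.filter fun j : Fin n => v j ≠ 0).card = k}
      = n.choose k := by
  have e : {S : Finset (Fin n) // S.card = k} ≃
      {v : Fin n → ZMod 2 // (Finset.univ.filter fun j : Fin n => v j ≠ 0).card = k} := by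
    refine ⟨fun S => ⟨fun j => if j ∈ S.1 then 1 else 0, ?_⟩,
      fun v => ⟨Finset.univ.filter fun j => v.1 j ≠ 0, v.2⟩, ?_, ?_⟩
    · have : (Finset.univ.filter fun j : Fin n =>
          (if j ∈ S.1 then (1 : ZMod 2) else 0) ≠ 0) = S.1 := by ext j; simp
      rw [this]; exact S.2
    · intro S
      apply Subtype.ext
      ext j; simp
    · intro v
      apply Subtype.ext
      funext j
      by_cases h : v.1 j = 0
      · simp [h]
      · simp [h, zmod2_eq_one h]
  rw [← Nat.card_congr e, Nat.card_eq_fintype_card, Fintype.card_finset_len, Fintype.card_fin]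

lemma Mset_card : (Mset L n k).card = (n.choose k) ^ L := by
  rw [← Nat.card_eq_finsetCard]
  have e2 : {A : Matrix (Fin L) (Fin n) (ZMod 2) // A ∈ Mset L n k} ≃
      (Fin L → {v : Fin n → ZMod 2 //
        (Finset.univ.filter fun j : Fin n => v j ≠ 0).card = k}) := by
    refine (Equiv.subtypeEquivRight ?_).trans (Equiv.subtypePiEquivPi
      (p := fun _ (v : Fin n → ZMod 2) =>
        (Finset.univ.filter fun j : Fin n => v j ≠ 0).card = k))
    intro A
    simp [Mset]
  rw [Nat.card_congr e2, Nat.card_pi]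
  simp only [card_rowset, Finset.prod_const, Finset.card_univ, Fintype.card_fin]

lemma Ycount_pos (A : Matrix (Fin L) (Fin n) (ZMod 2)) : 0 < Ycount A := by
  have : Nonempty {u : Fin L → ZMod 2 // Matrix.vecMul u A = 0} :=
    ⟨⟨0, by simp⟩⟩
  exact Nat.card_pos

end XorSatAux

open XorSatAux in
/-- `P_{n,L}(k-XOR-SAT) ≥ 1 / E_{L,k}(Y)`. -/
theorem Psat_ge_inv_EY (n L k : ℕ) (hk : 1 ≤ k) (hkn : k ≤ n) :
    1 / EY n L k ≤ Psat n L k := by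
  have hchoose : 0 < n.choose k := Nat.choose_pos hkn
  have hNpos : (0 : ℝ) < (n.choose k : ℝ) ^ L := by positivity
  set N : ℝ := (n.choose k : ℝ) ^ L with hNdef
  have hMcard : ((Mset L n k).card : ℝ) = N := by
    rw [Mset_card]; push_cast; rfl
  set S : ℝ := ∑ A ∈ Mset L n k, (satCount A : ℝ) with hSdef
  set Y : ℝ := ∑ A ∈ Mset L n k, (Ycount A : ℝ) with hYdef
  have hMne : (Mset L n k).Nonempty := by
    rw [← Finset.card_pos, Mset_card]
    exact pow_pos hchoose L
  have hYpos : 0 < Y := Finset.sum_pos (fun A _ => by exact_mod_cast Ycount_pos A) hMne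
  -- Cauchy–Schwarz
  have hCS : N ^ 2 * 2 ^ L ≤ S * Y := by
    have key := Finset.sum_mul_sq_le_sq_mul_sq (Mset L n k)
      (fun A => Real.sqrt (satCount A)) (fun A => Real.sqrt (Ycount A))
    have h1 : ∀ A ∈ Mset L n k,
        Real.sqrt (satCount A) * Real.sqrt (Ycount A) = Real.sqrt (2 ^ L) := by
      intro A _
      rw [← Real.sqrt_mul (by positivity)]
      congr 1
      exact_mod_cast prod_eq A
    rw [Finset.sum_congr rfl h1, Finset.sum_const, nsmul_eq_mul] at key
    have h2 : (∑ A ∈ Mset L n k, Real.sqrt (satCount A) ^ 2) = S := by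
      refine Finset.sum_congr rfl fun A _ => Real.sq_sqrt (by positivity)
    have h3 : (∑ A ∈ Mset L n k, Real.sqrt (Ycount A) ^ 2) = Y := by
      refine Finset.sum_congr rfl fun A _ => Real.sq_sqrt (by positivity)
    rw [h2, h3, mul_pow, Real.sq_sqrt (by positivity), hMcard] at key
    exact key
  have hnumSat : (numSat n L k : ℝ) = S := by
    rw [numSat_eq]; push_cast; rfl
  rw [Psat, EY, hnumSat, ← hYdef, ← hNdef, one_div_div]
  have hden : (2 * (n.choose k : ℝ)) ^ L = 2 ^ L * N := by
    rw [hNdef, mul_pow]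
  rw [hden, div_le_div_iff₀ hYpos (by positivity)]
  nlinarith [hCS, hNpos, hYpos]
end

section
/- Let k ≥ 3 be an integer and c > 0 a real number, and set L(n) = ⌊c·n⌋. If E_{L(n),k}(Y) (computed over M_{L(n),n,k}) tends to 1 as n → ∞, then for every real c' with 0 < c' ≤ c, P_{n,⌊c'·n⌋}(k-XOR-SAT) tends to 1 as n → ∞. -/
open Finset Filter

attribute [local instance] Classical.propDecidable

/-! For a fixed clause matrix `A`, the right-hand sides `ε` for which `A I = ε` is solvable form
the column space of `A`, which has `2 ^ rank A = 2 ^ L / Y(A)` elements since `rank A = rank Aᵀ`.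
Hence `P_{n,L}(k-XOR-SAT)` is the average of `1 / Y(A)`, and `y + 1 / y ≥ 2` gives
`P ≥ 2 - E_{L,k}(Y)`. Deleting rows of `A` only shrinks the kernel of `Aᵀ`, so `E_{L,k}(Y)` is
nondecreasing in `L`; being at least `1`, it tends to `1` along `⌊c' n⌋` as well, which squeezes
`P` between `2 - E(Y)` and `1`. -/

open Matrix
open scoped BigOperators

theorem natCard_range_mulVecLin_mul_natCard_ker_vecMul {K l m : Type*} [Field K] [Finite K]
    [Fintype l] [Fintype m] (A : Matrix l m K) :
    Nat.card (LinearMap.range A.mulVecLin) * Nat.card {u : l → K // u ᵥ* A = 0} =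
      Nat.card K ^ Fintype.card l := by
  have hker : Nat.card {u : l → K // u ᵥ* A = 0} = Nat.card (LinearMap.ker A.vecMulLinear) :=
    rfl
  have hrange : Module.finrank K (LinearMap.range A.mulVecLin) =
      Module.finrank K (LinearMap.range A.vecMulLinear) := by
    rw [← mulVecLin_transpose]
    exact (rank_transpose A).symm
  rw [hker, Module.natCard_eq_pow_finrank (K := K) (V := LinearMap.range _),
    Module.natCard_eq_pow_finrank (K := K) (V := LinearMap.ker _), ← pow_add, hrange,
    LinearMap.finrank_range_add_finrank_ker, Module.finrank_fintype_fun_eq_card]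

theorem natCard_ker_vecMul_submatrix_castAdd_le {R n : Type*} [Semiring R] [Finite R] {a b : ℕ}
    (A : Matrix (Fin (a + b)) n R) :
    Nat.card {u : Fin a → R // u ᵥ* A.submatrix (Fin.castAdd b) id = 0} ≤
      Nat.card {u : Fin (a + b) → R // u ᵥ* A = 0} := by
  have hpad (u : Fin a → R) : Fin.append u 0 ᵥ* A = u ᵥ* A.submatrix (Fin.castAdd b) id := by
    ext j
    simp [vecMul, dotProduct, Fin.sum_univ_add]
  refine Nat.card_le_card_of_injective (fun u => ⟨Fin.append u.1 0, (hpad u.1).trans u.2⟩) ?_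
  intro u v huv
  ext i
  simpa using congrFun (congrArg Subtype.val huv) (Fin.castAdd b i)

theorem one_le_Ycount {L n : ℕ} (A : Matrix (Fin L) (Fin n) (ZMod 2)) : 1 ≤ Ycount A :=
  have : Nonempty {u : Fin L → ZMod 2 // u ᵥ* A = 0} := ⟨⟨0, zero_vecMul A⟩⟩
  Nat.card_pos

theorem natCard_range_mulVecLin_div_eq_inv_Ycount {L n : ℕ}
    (A : Matrix (Fin L) (Fin n) (ZMod 2)) :
    (Nat.card (LinearMap.range A.mulVecLin) : ℝ) / 2 ^ L = (Ycount A : ℝ)⁻¹ := by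
  have hcard : (Nat.card (LinearMap.range A.mulVecLin) : ℝ) * Ycount A = 2 ^ L := by
    exact_mod_cast (natCard_range_mulVecLin_mul_natCard_ker_vecMul A).trans (by simp)
  refine eq_inv_of_mul_eq_one_left ?_
  rw [div_mul_eq_mul_div, hcard, div_self (by positivity)]

abbrev ClauseSupport (n k : ℕ) := {S : Finset (Fin n) // #S = k}

theorem nonempty_clauseSupport {n k : ℕ} (hkn : k ≤ n) : Nonempty (ClauseSupport n k) :=
  Fintype.card_pos_iff.mp (by simpa using Nat.choose_pos hkn)

def clauseMatrix {L n : ℕ} (S : Fin L → Finset (Fin n)) : Matrix (Fin L) (Fin n) (ZMod 2) :=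
  Matrix.of fun i j => if j ∈ S i then 1 else 0

theorem submatrix_clauseMatrix {L L' n : ℕ} (S : Fin L → Finset (Fin n))
    (e : Fin L' → Fin L) :
    (clauseMatrix S).submatrix e id = clauseMatrix fun i => S (e i) :=
  rfl

theorem clauseMatrix_mulVec_apply {L n : ℕ} (S : Fin L → Finset (Fin n)) (I : Fin n → ZMod 2)
    (i : Fin L) : (clauseMatrix S *ᵥ I) i = ∑ j ∈ S i, I j := by
  simp [clauseMatrix, mulVec, dotProduct, Finset.sum_ite_mem]

theorem filter_clauseMatrix_ne_zero {L n : ℕ} (S : Fin L → Finset (Fin n)) (i : Fin L) :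
    ({j | clauseMatrix S i j ≠ 0} : Finset (Fin n)) = S i := by
  ext j
  by_cases h : j ∈ S i <;> simp [clauseMatrix, h]

theorem clauseMatrix_filter_ne_zero {L n : ℕ} (A : Matrix (Fin L) (Fin n) (ZMod 2)) :
    clauseMatrix (fun i => {j | A i j ≠ 0}) = A := by
  ext i j
  have : ∀ x : ZMod 2, x ≠ 0 → x = 1 := by decide
  by_cases h : A i j = 0 <;> simp [clauseMatrix, h, this]

theorem sum_Mset {L n k : ℕ} {M : Type*} [AddCommMonoid M]
    (f : Matrix (Fin L) (Fin n) (ZMod 2) → M) :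
    ∑ A ∈ Mset L n k, f A =
      ∑ G : Fin L → ClauseSupport n k, f (clauseMatrix fun i => (G i).1) := by
  symm
  refine Finset.sum_bij' (fun G _ => clauseMatrix fun i => (G i).1)
    (fun A hA i => ⟨({j | A i j ≠ 0} : Finset (Fin n)), (Finset.mem_filter.1 hA).2 i⟩)
    ?_ (by simp) ?_ ?_ (by simp)
  · intro G _
    simp only [Mset, mem_filter, mem_univ, true_and, filter_clauseMatrix_ne_zero]
    exact fun i => (G i).2
  · intro G _
    ext i : 2
    exact filter_clauseMatrix_ne_zero _ i
  · intro A _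
    exact clauseMatrix_filter_ne_zero A

theorem satisfiable_iff_mem_range {n L k : ℕ} (F : Formula n L k) :
    Satisfiable F ↔
      (fun i => (F i).2) ∈ LinearMap.range (clauseMatrix fun i => (F i).1.1).mulVecLin := by
  simp only [Satisfiable, LinearMap.mem_range, mulVecLin_apply, funext_iff,
    clauseMatrix_mulVec_apply]

theorem numSat_eq_sum (n L k : ℕ) :
    numSat n L k = ∑ G : Fin L → ClauseSupport n k,
      Nat.card (LinearMap.range (clauseMatrix fun i => (G i).1).mulVecLin) :=
  calc numSat n L k
      = Nat.card {p : (Fin L → ClauseSupport n k) × (Fin L → ZMod 2) //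
          p.2 ∈ LinearMap.range (clauseMatrix fun i => (p.1 i).1).mulVecLin} :=
        Nat.card_congr <| (Equiv.arrowProdEquivProdArrow _ _ _).subtypeEquiv
          satisfiable_iff_mem_range
    _ = Nat.card (Σ G : Fin L → ClauseSupport n k,
          LinearMap.range (clauseMatrix fun i => (G i).1).mulVecLin) :=
        Nat.card_congr <| Equiv.subtypeProdEquivSigmaSubtype
          fun (G : Fin L → ClauseSupport n k) ε =>
            ε ∈ LinearMap.range (clauseMatrix fun i => (G i).1).mulVecLin
    _ = _ := Nat.card_sigma

theorem EY_eq_expect (n L k : ℕ) :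
    EY n L k =
      𝔼 G : Fin L → ClauseSupport n k, (Ycount (clauseMatrix fun i => (G i).1) : ℝ) := by
  rw [EY, sum_Mset, Fintype.expect_eq_sum_div_card]
  simp

theorem Psat_eq_expect (n L k : ℕ) :
    Psat n L k =
      𝔼 G : Fin L → ClauseSupport n k, (Ycount (clauseMatrix fun i => (G i).1) : ℝ)⁻¹ := by
  simp_rw [Psat, numSat_eq_sum, Fintype.expect_eq_sum_div_card,
    ← natCard_range_mulVecLin_div_eq_inv_Ycount, ← Finset.sum_div, div_div]
  simp [mul_pow, mul_comm]

theorem two_sub_le_inv {y : ℝ} (hy : 0 < y) : 2 - y ≤ y⁻¹ := by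
  have h : y⁻¹ - (2 - y) = (y - 1) ^ 2 / y := by field_simp; ring
  linarith [div_nonneg (sq_nonneg (y - 1)) hy.le]

theorem one_le_EY {n L k : ℕ} (hkn : k ≤ n) : 1 ≤ EY n L k := by
  have := nonempty_clauseSupport hkn
  rw [EY_eq_expect]
  exact le_expect univ_nonempty fun G _ => by exact_mod_cast one_le_Ycount _

theorem Psat_le_one (n L k : ℕ) : Psat n L k ≤ 1 := by
  rw [Psat_eq_expect]
  rcases isEmpty_or_nonempty (Fin L → ClauseSupport n k) with _ | _
  · simp
  · exact expect_le univ_nonempty fun G _ =>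
      inv_le_one_of_one_le₀ (by exact_mod_cast one_le_Ycount _)

theorem two_sub_EY_le_Psat {n L k : ℕ} (hkn : k ≤ n) : 2 - EY n L k ≤ Psat n L k := by
  have := nonempty_clauseSupport hkn
  rw [EY_eq_expect, Psat_eq_expect]
  calc 2 - 𝔼 G : Fin L → ClauseSupport n k, (Ycount (clauseMatrix fun i => (G i).1) : ℝ)
      = 𝔼 G : Fin L → ClauseSupport n k,
          (2 - Ycount (clauseMatrix fun i => (G i).1) : ℝ) := by
        rw [expect_sub_distrib, Fintype.expect_const]
    _ ≤ _ := expect_le_expect fun G _ => two_sub_le_inv (by exact_mod_cast one_le_Ycount _)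

theorem EY_mono {n k L L' : ℕ} (hkn : k ≤ n) (hL : L ≤ L') : EY n L k ≤ EY n L' k := by
  have := nonempty_clauseSupport hkn
  obtain ⟨m, rfl⟩ := Nat.exists_eq_add_of_le hL
  rw [EY_eq_expect, EY_eq_expect]
  calc 𝔼 G : Fin L → ClauseSupport n k, (Ycount (clauseMatrix fun i => (G i).1) : ℝ)
      = 𝔼 GH : (Fin L → ClauseSupport n k) × (Fin m → ClauseSupport n k),
          (Ycount (clauseMatrix fun i => (GH.1 i).1) : ℝ) := by
        rw [← univ_product_univ, expect_product]
        simp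
    _ = 𝔼 G : Fin (L + m) → ClauseSupport n k,
          (Ycount (clauseMatrix fun i => (G (Fin.castAdd m i)).1) : ℝ) :=
        Fintype.expect_equiv (Fin.appendEquiv L m) _ _ fun GH => by
          simp only [Fin.appendEquiv_apply, Fin.append_left]
    _ ≤ _ := expect_le_expect fun G _ => by
        have := natCard_ker_vecMul_submatrix_castAdd_le (clauseMatrix fun i => (G i).1)
        rw [submatrix_clauseMatrix] at this
        exact_mod_cast this

theorem tendsto_Psat_of_tendsto_EY_general (k : ℕ) (c : ℝ)
    (hE : Tendsto (fun n : ℕ => EY n ⌊c * n⌋₊ k) atTop (nhds 1)) :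
    ∀ c' : ℝ, 0 < c' → c' ≤ c →
      Tendsto (fun n : ℕ => Psat n ⌊c' * n⌋₊ k) atTop (nhds 1) := by
  intro c' _ hc'
  have hEY : Tendsto (fun n : ℕ => EY n ⌊c' * n⌋₊ k) atTop (nhds 1) :=
    tendsto_of_tendsto_of_tendsto_of_le_of_le' tendsto_const_nhds hE
      ((eventually_ge_atTop k).mono fun n hn => one_le_EY hn)
      ((eventually_ge_atTop k).mono fun n hn =>
        EY_mono hn (Nat.floor_le_floor (by gcongr)))
  have hlower : Tendsto (fun n : ℕ => 2 - EY n ⌊c' * n⌋₊ k) atTop (nhds 1) := by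
    simpa [show (2 : ℝ) - 1 = 1 by norm_num] using (tendsto_const_nhds (x := (2 : ℝ))).sub hEY
  exact tendsto_of_tendsto_of_tendsto_of_le_of_le' hlower tendsto_const_nhds
    ((eventually_ge_atTop k).mono fun n hn => two_sub_EY_le_Psat hn)
    (Eventually.of_forall fun n => Psat_le_one n _ k)

/-- If `E_{⌊c·n⌋,k}(Y) → 1` as `n → ∞`, then for every `0 < c' ≤ c`,
`P_{n,⌊c'·n⌋}(k-XOR-SAT) → 1` as `n → ∞`. -/
theorem tendsto_Psat_of_tendsto_EY (k : ℕ) (hk : 3 ≤ k) (c : ℝ) (hc : 0 < c)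
    (hE : Tendsto (fun n : ℕ => EY n ⌊c * n⌋₊ k) atTop (nhds 1)) :
    ∀ c' : ℝ, 0 < c' → c' ≤ c →
      Tendsto (fun n : ℕ => Psat n ⌊c' * n⌋₊ k) atTop (nhds 1) :=
  tendsto_Psat_of_tendsto_EY_general k c hE
end

section
/- For all integers n, L, k with n ≥ k ≥ 1 and L ≥ 0, E_{L,k}(Y) = 2^{−n} · ∑_{m=0}^{n} C(n,m) · (1 + ω_{n,m,k}/C(n,k))^L, as an equality of real numbers. -/
open Finset Filter

attribute [local instance] Classical.propDecidable

/-- `ω_{n,m,k} = ∑_{s=0}^{k} (−1)^s C(m,s) C(n−m,k−s)`. -/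
def omegaW (n m k : ℕ) : ℤ :=
  ∑ s ∈ Finset.range (k + 1), (-1 : ℤ) ^ s * (m.choose s : ℤ) * ((n - m).choose (k - s) : ℤ)

/-!
Let `χ` be the sign character of `ZMod 2`. Orthogonality of characters turns the kernel count into
`2^n Y(A) = ∑_x ∏_i (1 + χ(A_i ⬝ x))`, so after summing over `A ∈ M_{L,n,k}` the rows decouple:
`2^n ∑_A Y(A) = ∑_x (∑_{|r| = k} (1 + χ(r ⬝ x)))^L`. The generating function
`∑_r χ(r ⬝ x) t^{|r|} = (1 - t)^{|x|} (1 + t)^{n - |x|}` shows that `∑_{|r| = k} χ(r ⬝ x)` is its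
`t^k`-coefficient `ω_{n,|x|,k}`, so the inner sum is `C(n,k) + ω_{n,|x|,k}`; grouping the `x` by
Hamming weight gives the formula.
-/

open Polynomial

def signChar : AddChar (ZMod 2) ℤ := AddChar.zmodChar 2 (neg_one_sq (R := ℤ))

lemma AddChar.map_sum_eq_prod {ι A M : Type*} [AddCommMonoid A] [CommMonoid M]
    (ψ : AddChar A M) (s : Finset ι) (f : ι → A) :
    ψ (∑ i ∈ s, f i) = ∏ i ∈ s, ψ (f i) :=
  map_prod ψ.toMonoidHom (fun i => Multiplicative.ofAdd (f i)) s

lemma ZMod.sum_univ_two {M : Type*} [AddCommMonoid M] (f : ZMod 2 → M) :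
    ∑ c, f c = f 0 + f 1 :=
  Fin.sum_univ_two f

lemma signChar_one : signChar 1 = -1 := by decide

lemma sum_signChar_mul (a : ZMod 2) : ∑ c, signChar (c * a) = 1 + signChar a := by
  decide +revert

lemma one_add_signChar (a : ZMod 2) : 1 + signChar a = if a = 0 then 2 else 0 := by
  decide +revert

section
variable {ι : Type*} [Fintype ι]

lemma prod_one_add_signChar (v : ι → ZMod 2) :
    ∏ i, (1 + signChar (v i)) = if v = 0 then 2 ^ Fintype.card ι else 0 := by
  simp only [one_add_signChar, Fintype.prod_ite_zero, funext_iff, Pi.zero_apply, prod_const,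
    card_univ]

variable [DecidableEq ι]

lemma sum_signChar_dotProduct (v : ι → ZMod 2) :
    ∑ x : ι → ZMod 2, signChar (x ⬝ᵥ v) = ∏ i, (1 + signChar (v i)) := by
  simp only [dotProduct, AddChar.map_sum_eq_prod, ← sum_signChar_mul, Fintype.prod_sum]

lemma coeff_sum_C_mul_X_pow_hammingNorm (f : (ι → ZMod 2) → ℤ) (k : ℕ) :
    (∑ r, C (f r) * X ^ hammingNorm r).coeff k = ∑ r with hammingNorm r = k, f r := by
  simp only [finsetSum_coeff, coeff_C_mul_X_pow, sum_filter, eq_comm]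

lemma sum_signChar_dotProduct_mul_X_pow_hammingNorm (x : ι → ZMod 2) :
    ∑ r : ι → ZMod 2, C (signChar (r ⬝ᵥ x)) * X ^ hammingNorm r
      = (1 - X) ^ hammingNorm x * (1 + X) ^ (Fintype.card ι - hammingNorm x) := by
  have hX : ∀ r : ι → ZMod 2,
      (X : ℤ[X]) ^ hammingNorm r = ∏ i, X ^ (if r i ≠ 0 then 1 else 0) := by
    intro r
    rw [prod_pow_eq_pow_sum, ← card_filter]
    rfl
  have hcoord : ∀ a : ZMod 2, ∑ c : ZMod 2, C (signChar (c * a)) * X ^ (if c ≠ 0 then 1 else 0)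
      = if a = 0 then 1 + X else 1 - X := by
    intro a
    obtain rfl | rfl : a = 0 ∨ a = 1 := by decide +revert
    all_goals simp [ZMod.sum_univ_two, signChar_one, sub_eq_add_neg]
  let g : ι → ZMod 2 → ℤ[X] := fun i c => C (signChar (c * x i)) * X ^ (if c ≠ 0 then 1 else 0)
  calc ∑ r : ι → ZMod 2, C (signChar (r ⬝ᵥ x)) * X ^ hammingNorm r
      = ∑ r : ι → ZMod 2, ∏ i, g i (r i) := by
        simp only [g, dotProduct, AddChar.map_sum_eq_prod, hX, map_prod, prod_mul_distrib]
    _ = ∏ i, if x i = 0 then 1 + X else 1 - X := by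
        rw [← Fintype.prod_sum]
        simp only [g, hcoord]
    _ = (1 - X) ^ hammingNorm x * (1 + X) ^ (Fintype.card ι - hammingNorm x) := by
        have h := card_filter_add_card_filter_not (s := univ) (x · = 0)
        rw [prod_ite, prod_const, prod_const, mul_comm, card_univ] at *
        congr 2
        exact Nat.eq_sub_of_add_eq h

lemma card_hammingNorm_eq (k : ℕ) :
    #{r : ι → ZMod 2 | hammingNorm r = k} = (Fintype.card ι).choose k := by
  have h := congrArg (coeff · k) (sum_signChar_dotProduct_mul_X_pow_hammingNorm (0 : ι → ZMod 2))
  simp only [coeff_sum_C_mul_X_pow_hammingNorm, dotProduct_zero, AddChar.map_zero_eq_one,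
    hammingNorm_zero, pow_zero, one_mul, tsub_zero, coeff_one_add_X_pow, sum_const, nsmul_eq_mul,
    mul_one] at h
  exact_mod_cast h

end

lemma omegaW_eq_coeff (n m k : ℕ) :
    omegaW n m k = ((1 - X) ^ m * (1 + X) ^ (n - m) : ℤ[X]).coeff k := by
  have h : (1 - X : ℤ[X]) ^ m = ((1 + X) ^ m).comp (C (-1) * X) := by
    simp [sub_eq_add_neg]
  rw [coeff_mul, Finset.Nat.sum_antidiagonal_eq_sum_range_succ_mk, omegaW]
  refine sum_congr rfl fun s _ => ?_
  rw [h, comp_C_mul_X_coeff, coeff_one_add_X_pow, coeff_one_add_X_pow]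
  ring

lemma sum_signChar_dotProduct_of_hammingNorm_eq {n : ℕ} (x : Fin n → ZMod 2) (k : ℕ) :
    ∑ r with hammingNorm r = k, signChar (r ⬝ᵥ x) = omegaW n (hammingNorm x) k := by
  rw [← coeff_sum_C_mul_X_pow_hammingNorm, sum_signChar_dotProduct_mul_X_pow_hammingNorm,
    Fintype.card_fin, omegaW_eq_coeff]

lemma sum_comp_hammingNorm {M : Type*} [AddCommMonoid M] (n : ℕ) (f : ℕ → M) :
    ∑ x : Fin n → ZMod 2, f (hammingNorm x) = ∑ m ∈ range (n + 1), n.choose m • f m := by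
  rw [← sum_fiberwise_of_maps_to (g := hammingNorm) (t := range (n + 1))]
  · refine sum_congr rfl fun m _ => ?_
    rw [sum_congr rfl fun x hx => by rw [(mem_filter.mp hx).2], sum_const, card_hammingNorm_eq,
      Fintype.card_fin]
  · intro x _
    exact mem_range_succ_iff.mpr ((hammingNorm_le_card_fintype).trans (Fintype.card_fin n).le)

lemma mem_Mset_iff {L n k : ℕ} (A : Matrix (Fin L) (Fin n) (ZMod 2)) :
    A ∈ Mset L n k ↔ ∀ i, hammingNorm (A i) = k := by
  simp only [Mset, mem_filter, mem_univ, true_and, hammingNorm]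

lemma sum_Mset_prod (L n k : ℕ) (f : (Fin n → ZMod 2) → ℤ) :
    ∑ A ∈ Mset L n k, ∏ i, f (A i) = (∑ r with hammingNorm r = k, f r) ^ L := by
  have hM : Mset L n k = Fintype.piFinset fun _ => {r | hammingNorm r = k} := by
    ext A
    refine (mem_Mset_iff A).trans (Iff.trans ?_ Fintype.mem_piFinset.symm)
    simp only [mem_filter, mem_univ, true_and]
  rw [hM]
  exact (prod_univ_sum _ fun _ => f).symm.trans (by rw [prod_const, card_univ, Fintype.card_fin])

open Matrix in
lemma Ycount_mul_two_pow {L n : ℕ} (A : Matrix (Fin L) (Fin n) (ZMod 2)) :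
    (Ycount A : ℤ) * 2 ^ n = ∑ x : Fin n → ZMod 2, ∏ i, (1 + signChar (A i ⬝ᵥ x)) := by
  calc (Ycount A : ℤ) * 2 ^ n = ∑ u : Fin L → ZMod 2, ∏ j, (1 + signChar ((u ᵥ* A) j)) := by
        simp only [Ycount, Nat.card_eq_fintype_card, Fintype.card_subtype, card_filter,
          Nat.cast_sum, sum_mul, prod_one_add_signChar, Fintype.card_fin]
        refine sum_congr rfl fun u _ => ?_
        split_ifs <;> simp
    _ = ∑ x : Fin n → ZMod 2, ∑ u : Fin L → ZMod 2, signChar (u ⬝ᵥ (A *ᵥ x)) := by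
        simp only [← sum_signChar_dotProduct, dotProduct_mulVec, dotProduct_comm _ (_ ᵥ* A)]
        exact sum_comm
    _ = _ := by simp only [sum_signChar_dotProduct]; rfl

theorem sum_Ycount_mul_two_pow (n L k : ℕ) :
    (∑ A ∈ Mset L n k, (Ycount A : ℤ)) * 2 ^ n
      = ∑ m ∈ range (n + 1), n.choose m * (n.choose k + omegaW n m k) ^ L := by
  have hrow : ∀ x : Fin n → ZMod 2, ∑ r with hammingNorm r = k, (1 + signChar (r ⬝ᵥ x))
      = n.choose k + omegaW n (hammingNorm x) k := by
    intro x
    rw [sum_add_distrib, sum_signChar_dotProduct_of_hammingNorm_eq, sum_const, card_hammingNorm_eq,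
      Fintype.card_fin, nsmul_one]
  calc (∑ A ∈ Mset L n k, (Ycount A : ℤ)) * 2 ^ n
      = ∑ A ∈ Mset L n k, ∑ x : Fin n → ZMod 2, ∏ i, (1 + signChar (A i ⬝ᵥ x)) := by
        rw [sum_mul]
        exact sum_congr rfl fun A _ => Ycount_mul_two_pow A
    _ = ∑ x : Fin n → ZMod 2, (∑ r with hammingNorm r = k, (1 + signChar (r ⬝ᵥ x))) ^ L := by
        rw [sum_comm]
        exact sum_congr rfl fun x _ => sum_Mset_prod L n k fun r => 1 + signChar (r ⬝ᵥ x)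
    _ = ∑ x : Fin n → ZMod 2, ((n.choose k : ℤ) + omegaW n (hammingNorm x) k) ^ L := by
        simp only [hrow]
    _ = _ := by
        simp only [sum_comp_hammingNorm n fun m => ((n.choose k : ℤ) + omegaW n m k) ^ L,
          nsmul_eq_mul]

theorem EY_eq_sum_general (n L k : ℕ) (hkn : k ≤ n) :
    EY n L k = (2 : ℝ) ^ (-(n : ℤ)) * ∑ m ∈ Finset.range (n + 1),
      (n.choose m : ℝ) * (1 + (omegaW n m k : ℝ) / (n.choose k : ℝ)) ^ L := by
  have hC : (n.choose k : ℝ) ≠ 0 := by exact_mod_cast (Nat.choose_pos hkn).ne'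
  have h := congrArg (Int.cast : ℤ → ℝ) (sum_Ycount_mul_two_pow n L k)
  push_cast at h
  rw [EY, zpow_neg, zpow_natCast, eq_inv_mul_iff_mul_eq₀ (by positivity), mul_comm,
    ← mul_div_right_comm, h, sum_div]
  refine sum_congr rfl fun m _ => ?_
  rw [one_add_div hC, div_pow, mul_div_assoc]

/-- `E_{L,k}(Y) = 2^{−n} ∑_{m=0}^{n} C(n,m) (1 + ω_{n,m,k}/C(n,k))^L`. -/
theorem EY_eq_sum (n L k : ℕ) (hk : 1 ≤ k) (hkn : k ≤ n) :
    EY n L k = (2 : ℝ) ^ (-(n : ℤ)) * ∑ m ∈ Finset.range (n + 1),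
      (n.choose m : ℝ) * (1 + (omegaW n m k : ℝ) / (n.choose k : ℝ)) ^ L :=
  EY_eq_sum_general n L k hkn
end

section
/- For every integer k ≥ 3 there exists a polynomial P in two variables over ℚ of total degree at most k−2 such that for all natural numbers m ≤ n: (ω_{n,m,k} : ℚ) = (n−2m)^k / k! − n·(n−2m)^{k−2} / (2·(k−2)!) + P(n,m), where n−2m is computed in ℚ. -/
/-!
The falling factorial `x (x-1) ⋯ (x-i+1)` is `x ^ i - C(i,2) x ^ (i-1)` plus terms of degree
`≤ i - 2`. Put `y = m`, `z = n - m` in `ω = ∑_{i+j=k} (-1)^i C(y,i) C(z,j)` and expand each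
product `C(y,i) C(z,j)` to its terms of degree `k` and `k - 1` plus a remainder of degree `≤ k - 2`.
By the binomial theorem the degree-`k` terms sum to `(z - y)^k / k!`; after the shift
`i ↦ i + 2` (resp. `j ↦ j + 2`) the degree-`(k-1)` terms sum to
`-(y + z)(z - y)^(k-2) / (2 (k-2)!)`, and `z - y = n - 2m`, `y + z = n`.
-/

open Finset Filter

attribute [local instance] Classical.propDecidable

open scoped Nat

section descPochhammerTail

open Polynomial

variable (R : Type*) [CommRing R]

noncomputable def descPochhammerHead (i : ℕ) : R[X] :=
  X ^ i - C (i.choose 2 : R) * X ^ (i - 1)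

noncomputable def descPochhammerTail (i : ℕ) : R[X] :=
  descPochhammer R i - descPochhammerHead R i

lemma descPochhammerHead_add_descPochhammerTail (i : ℕ) :
    descPochhammerHead R i + descPochhammerTail R i = descPochhammer R i :=
  add_sub_cancel _ _

lemma natDegree_descPochhammerHead_le (i : ℕ) : (descPochhammerHead R i).natDegree ≤ i :=
  (natDegree_sub_le _ _).trans <| max_le (natDegree_X_pow_le i)
    ((natDegree_C_mul_le _ _).trans <| (natDegree_X_pow_le _).trans (Nat.sub_le i 1))

lemma descPochhammerTail_add_three (i : ℕ) :
    descPochhammerTail R (i + 3) = C ((i + 2).choose 2 * (i + 2) : R) * X ^ (i + 1) +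
      descPochhammerTail R (i + 2) * (X - C (i + 2 : R)) := by
  have hc : ((i + 3).choose 2 : R) = (i + 2).choose 2 + (i + 2) := by
    rw [Nat.choose_succ_succ', Nat.choose_one_right]; push_cast; ring
  simp only [descPochhammerTail, descPochhammerHead, descPochhammer_succ_right R (i + 2), hc,
    show i + 3 - 1 = i + 2 from rfl, map_add, map_mul, map_natCast, map_ofNat]
  push_cast
  ring

variable {R}

lemma descPochhammerTail_eq_zero_of_le_two {i : ℕ} (hi : i ≤ 2) : descPochhammerTail R i = 0 := by
  interval_cases i <;> simp [descPochhammerTail, descPochhammerHead, descPochhammer_succ_right]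
  ring

lemma natDegree_descPochhammerTail_le (i : ℕ) : (descPochhammerTail R i).natDegree ≤ i - 2 := by
  induction i with
  | zero => simp [descPochhammerTail_eq_zero_of_le_two]
  | succ i ih =>
    rcases le_or_gt (i + 1) 2 with hi | hi
    · simp [descPochhammerTail_eq_zero_of_le_two hi]
    obtain ⟨i, rfl⟩ : ∃ j, i = j + 2 := ⟨i - 2, by omega⟩
    rw [descPochhammerTail_add_three]
    refine (natDegree_add_le _ _).trans <| max_le ?_ ?_
    · exact (natDegree_C_mul_le _ _).trans (natDegree_X_pow_le _)
    · calc _ ≤ (descPochhammerTail R (i + 2)).natDegree + (X - C (i + 2 : R)).natDegree :=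
            natDegree_mul_le
        _ ≤ i + 1 := add_le_add (by simpa using ih) (natDegree_X_sub_C_le _)

end descPochhammerTail

noncomputable def omegaWeight (i j : ℕ) : ℚ := (-1) ^ i / (i ! * j !)

lemma omegaWeight_eq_choose_mul (i j : ℕ) :
    omegaWeight i j = ((i + j)! : ℚ)⁻¹ * (i + j).choose i * (-1) ^ i := by
  rw [omegaWeight, Nat.cast_add_choose]
  field_simp

lemma omegaWeight_add_two_left_mul_choose_two (i j : ℕ) :
    omegaWeight (i + 2) j * (i + 2).choose 2 = omegaWeight i j / 2 := by
  rw [omegaWeight, omegaWeight, Nat.cast_choose_two, Nat.factorial_succ, Nat.factorial_succ]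
  push_cast
  field_simp
  ring

lemma omegaWeight_add_two_right_mul_choose_two (i j : ℕ) :
    omegaWeight i (j + 2) * (j + 2).choose 2 = omegaWeight i j / 2 := by
  rw [omegaWeight, omegaWeight, Nat.cast_choose_two, Nat.factorial_succ (j + 1), Nat.factorial_succ]
  push_cast
  field_simp
  ring

section Algebra

variable {A : Type*} [CommRing A] [Algebra ℚ A]

lemma sum_antidiagonal_omegaWeight_smul (y z : A) (k : ℕ) :
    ∑ p ∈ antidiagonal k, omegaWeight p.1 p.2 • (y ^ p.1 * z ^ p.2) =
      (k ! : ℚ)⁻¹ • (z - y) ^ k := by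
  rw [sub_eq_neg_add, (Commute.all _ _).add_pow', smul_sum]
  refine sum_congr rfl fun p hp => ?_
  rw [← HasAntidiagonal.mem_antidiagonal.mp hp, omegaWeight_eq_choose_mul, ← Nat.cast_smul_eq_nsmul ℚ,
    ← neg_one_smul ℚ y, smul_pow, smul_mul_assoc, smul_smul, smul_smul]

lemma sum_antidiagonal_omegaWeight_choose_two_left (y z : A) (k : ℕ) :
    ∑ p ∈ antidiagonal (k + 2), (omegaWeight p.1 p.2 * p.1.choose 2) • (y ^ (p.1 - 1) * z ^ p.2) =
      (2 * k ! : ℚ)⁻¹ • (y * (z - y) ^ k) := by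
  rw [Nat.sum_antidiagonal_succ, Nat.sum_antidiagonal_succ]
  simp only [Nat.choose_zero_succ, Nat.choose_succ_self, zero_add, Nat.cast_zero, mul_zero,
    zero_smul, add_assoc, Nat.reduceAdd, omegaWeight_add_two_left_mul_choose_two]
  rw [mul_inv, mul_smul (2 : ℚ)⁻¹, ← mul_smul_comm _ y, ← sum_antidiagonal_omegaWeight_smul,
    mul_sum, smul_sum]
  refine sum_congr rfl fun p _ => ?_
  rw [show p.1 + 2 - 1 = p.1 + 1 by omega, div_eq_inv_mul, mul_smul, mul_smul_comm, pow_succ',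
    mul_assoc]

lemma sum_antidiagonal_omegaWeight_choose_two_right (y z : A) (k : ℕ) :
    ∑ p ∈ antidiagonal (k + 2), (omegaWeight p.1 p.2 * p.2.choose 2) • (y ^ p.1 * z ^ (p.2 - 1)) =
      (2 * k ! : ℚ)⁻¹ • (z * (z - y) ^ k) := by
  rw [Nat.sum_antidiagonal_succ', Nat.sum_antidiagonal_succ']
  simp only [Nat.choose_zero_succ, Nat.choose_succ_self, zero_add, Nat.cast_zero, mul_zero,
    zero_smul, add_assoc, Nat.reduceAdd, omegaWeight_add_two_right_mul_choose_two]
  rw [mul_inv, mul_smul (2 : ℚ)⁻¹, ← mul_smul_comm _ z, ← sum_antidiagonal_omegaWeight_smul,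
    mul_sum, smul_sum]
  refine sum_congr rfl fun p _ => ?_
  rw [show p.2 + 2 - 1 = p.2 + 1 by omega, div_eq_inv_mul, mul_smul, mul_smul_comm, pow_succ',
    mul_left_comm]

open Polynomial in
noncomputable def descPochhammerMulRemainder (y z : A) (i j : ℕ) : A :=
  (i.choose 2 * j.choose 2 : ℚ) • (y ^ (i - 1) * z ^ (j - 1)) +
    aeval y (descPochhammerHead ℚ i) * aeval z (descPochhammerTail ℚ j) +
    aeval y (descPochhammerTail ℚ i) * aeval z (descPochhammer ℚ j)

open Polynomial in
lemma aeval_descPochhammer_mul_aeval_descPochhammer (y z : A) (i j : ℕ) :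
    aeval y (descPochhammer ℚ i) * aeval z (descPochhammer ℚ j) =
      y ^ i * z ^ j - (i.choose 2 : ℚ) • (y ^ (i - 1) * z ^ j) -
        (j.choose 2 : ℚ) • (y ^ i * z ^ (j - 1)) + descPochhammerMulRemainder y z i j := by
  rw [descPochhammerMulRemainder, ← descPochhammerHead_add_descPochhammerTail ℚ i,
    ← descPochhammerHead_add_descPochhammerTail ℚ j]
  simp only [descPochhammerHead, map_add, map_sub, map_mul, map_pow, aeval_X, Algebra.smul_def,
    map_natCast]
  ring

open Polynomial in
lemma sum_antidiagonal_omegaWeight_smul_aeval_descPochhammer (y z : A) (k : ℕ) :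
    ∑ p ∈ antidiagonal (k + 2),
        omegaWeight p.1 p.2 • (aeval y (descPochhammer ℚ p.1) * aeval z (descPochhammer ℚ p.2)) =
      ((k + 2)! : ℚ)⁻¹ • (z - y) ^ (k + 2) - (2 * k ! : ℚ)⁻¹ • ((y + z) * (z - y) ^ k) +
        ∑ p ∈ antidiagonal (k + 2), omegaWeight p.1 p.2 • descPochhammerMulRemainder y z p.1 p.2 := by
  simp only [aeval_descPochhammer_mul_aeval_descPochhammer, smul_add, smul_sub, smul_smul,
    sum_add_distrib, sum_sub_distrib, sum_antidiagonal_omegaWeight_smul,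
    sum_antidiagonal_omegaWeight_choose_two_left, sum_antidiagonal_omegaWeight_choose_two_right]
  rw [add_mul, smul_add]
  abel

open Polynomial in
lemma map_descPochhammerMulRemainder {B : Type*} [CommRing B] [Algebra ℚ B] (f : A →ₐ[ℚ] B)
    (y z : A) (i j : ℕ) :
    f (descPochhammerMulRemainder y z i j) = descPochhammerMulRemainder (f y) (f z) i j := by
  simp [descPochhammerMulRemainder, aeval_algHom_apply]

end Algebra

section totalDegree

open MvPolynomial

variable {σ : Type*}

lemma MvPolynomial.totalDegree_aeval_le {R : Type*} [CommSemiring R] {L : MvPolynomial σ R}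
    (hL : L.totalDegree ≤ 1) (p : Polynomial R) :
    (Polynomial.aeval L p).totalDegree ≤ p.natDegree := by
  rw [Polynomial.aeval_eq_sum_range]
  refine (totalDegree_finsetSum _ _).trans (Finset.sup_le fun i hi => ?_)
  calc _ ≤ (L ^ i).totalDegree := totalDegree_smul_le _ _
    _ ≤ i * L.totalDegree := totalDegree_pow _ _
    _ ≤ p.natDegree := (mul_le_of_le_one_right (Nat.zero_le i) hL).trans
        (Nat.lt_succ_iff.mp (mem_range.mp hi))

lemma totalDegree_descPochhammerMulRemainder_le {y z : MvPolynomial σ ℚ} (hy : y.totalDegree ≤ 1)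
    (hz : z.totalDegree ≤ 1) (i j : ℕ) :
    (descPochhammerMulRemainder y z i j).totalDegree ≤ i + j - 2 := by
  have hpow {x : MvPolynomial σ ℚ} (hx : x.totalDegree ≤ 1) (n : ℕ) : (x ^ n).totalDegree ≤ n :=
    (totalDegree_pow x n).trans (mul_le_of_le_one_right (Nat.zero_le n) hx)
  have hy' := totalDegree_aeval_le hy
  have hz' := totalDegree_aeval_le hz
  refine (totalDegree_add _ _).trans (max_le ((totalDegree_add _ _).trans (max_le ?_ ?_)) ?_)
  · rcases lt_or_ge i 2 with hi | hi
    · simp [Nat.choose_eq_zero_of_lt hi]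
    rcases lt_or_ge j 2 with hj | hj
    · simp [Nat.choose_eq_zero_of_lt hj]
    calc _ ≤ (y ^ (i - 1) * z ^ (j - 1)).totalDegree := totalDegree_smul_le _ _
      _ ≤ (i - 1) + (j - 1) := (totalDegree_mul _ _).trans (add_le_add (hpow hy _) (hpow hz _))
      _ ≤ i + j - 2 := by omega
  · rcases lt_or_ge j 2 with hj | hj
    · simp [descPochhammerTail_eq_zero_of_le_two hj.le]
    calc _ ≤ i + (j - 2) := (totalDegree_mul _ _).trans <| add_le_add
          ((hy' _).trans (natDegree_descPochhammerHead_le ℚ i))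
          ((hz' _).trans (natDegree_descPochhammerTail_le j))
      _ ≤ i + j - 2 := by omega
  · rcases lt_or_ge i 2 with hi | hi
    · simp [descPochhammerTail_eq_zero_of_le_two hi.le]
    calc _ ≤ (i - 2) + j := (totalDegree_mul _ _).trans <| add_le_add
          ((hy' _).trans (natDegree_descPochhammerTail_le i))
          ((hz' _).trans (descPochhammer_natDegree ℚ j).le)
      _ ≤ i + j - 2 := by omega

end totalDegree

open Polynomial in
lemma omegaW_eq_sum_antidiagonal {n m : ℕ} (h : m ≤ n) (k : ℕ) :
    (omegaW n m k : ℚ) = ∑ p ∈ antidiagonal k, omegaWeight p.1 p.2 •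
      (aeval (m : ℚ) (descPochhammer ℚ p.1) * aeval ((n : ℚ) - m) (descPochhammer ℚ p.2)) := by
  rw [omegaW, Nat.sum_antidiagonal_eq_sum_range_succ (fun i j => omegaWeight i j •
    (aeval (m : ℚ) (descPochhammer ℚ i) * aeval ((n : ℚ) - m) (descPochhammer ℚ j)))]
  push_cast
  refine sum_congr rfl fun i _ => ?_
  rw [Nat.cast_choose_eq_descPochhammer_div, Nat.cast_choose_eq_descPochhammer_div, Nat.cast_sub h,
    omegaWeight, coe_aeval_eq_eval, coe_aeval_eq_eval, smul_eq_mul]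
  ring

/-- `ω_{n,m,k} = (n−2m)^k/k! − n(n−2m)^{k−2}/(2(k−2)!) + P_k(n,m)` where `P_k`
is a polynomial in two variables of total degree at most `k−2`. -/
theorem omegaW_expansion (k : ℕ) (hk : 3 ≤ k) :
    ∃ P : MvPolynomial (Fin 2) ℚ, P.totalDegree ≤ k - 2 ∧
      ∀ n m : ℕ, m ≤ n →
        (omegaW n m k : ℚ) =
          ((n : ℚ) - 2 * m) ^ k / (k.factorial : ℚ)
            - (n : ℚ) * ((n : ℚ) - 2 * m) ^ (k - 2) / (2 * ((k - 2).factorial : ℚ))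
            + MvPolynomial.eval ![(n : ℚ), (m : ℚ)] P := by
  obtain ⟨k, rfl⟩ : ∃ j, k = j + 2 := ⟨k - 2, by omega⟩
  have hy : (MvPolynomial.X 1 : MvPolynomial (Fin 2) ℚ).totalDegree ≤ 1 :=
    (MvPolynomial.totalDegree_X _).le
  have hz : (MvPolynomial.X 0 - MvPolynomial.X 1 : MvPolynomial (Fin 2) ℚ).totalDegree ≤ 1 :=
    (MvPolynomial.totalDegree_sub _ _).trans (by simp)
  refine ⟨∑ p ∈ antidiagonal (k + 2), omegaWeight p.1 p.2 •
    descPochhammerMulRemainder (MvPolynomial.X 1) (MvPolynomial.X 0 - MvPolynomial.X 1) p.1 p.2,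
    ?_, fun n m hmn => ?_⟩
  · refine (MvPolynomial.totalDegree_finsetSum _ _).trans (Finset.sup_le fun p hp => ?_)
    refine (MvPolynomial.totalDegree_smul_le _ _).trans ?_
    simpa [mem_antidiagonal.mp hp] using totalDegree_descPochhammerMulRemainder_le hy hz p.1 p.2
  · rw [omegaW_eq_sum_antidiagonal hmn, sum_antidiagonal_omegaWeight_smul_aeval_descPochhammer]
    change _ = _ + MvPolynomial.aeval ![(n : ℚ), m] _
    simp only [map_sum, map_smul, map_descPochhammerMulRemainder, map_sub, MvPolynomial.aeval_X,
      Matrix.cons_val_zero, Matrix.cons_val_one, Matrix.cons_val_fin_one, Nat.add_sub_cancel]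
    ring
end

section
/- For every integer k ≥ 3 there exist a real constant C > 0 and a natural number N such that for all n ≥ N, all natural numbers L ≤ n, and all m ≤ n satisfying either m − n/2 ≤ −n^{1−4/(3k)}, or (k is even and m − n/2 ≥ n^{1−4/(3k)}): |1 + ω_{n,m,k}/C(n,k)|^L ≤ C · (1 + (1−2m/n)^k)^L. -/
/-!
`ω_{n,m,k}` is the coefficient of `X^k` in `(1 - X)^m (1 + X)^(n-m)`. For `2m ≤ n` this
polynomial is `(1 - X²)^m (1 + X)^(n-2m)`, so `ω_{n,m,k}` is `C(n-2m,k)` plus at most `k` terms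
of size at most `n^(k-1)`. Since `C(n-2m,k)/C(n,k) ≤ (1 - 2m/n)^k` and `n^k ≤ 2^k k! C(n,k)` for
`n ≥ 2k`, this gives `1 + ω/C(n,k) ≤ (1 + (1 - 2m/n)^k)(1 + c/n)` with `c = k·k!·2^k`, and
`(1 + c/n)^L ≤ e^c` for `L ≤ n`; the Vandermonde bound `|ω_{n,m,k}| ≤ C(n,k)` keeps the base
nonnegative. The case `2m ≥ n` with `k` even reduces to this one through
`ω_{n,n-m,k} = (-1)^k ω_{n,m,k}`.
-/

open Finset Filter

attribute [local instance] Classical.propDecidable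

open Polynomial

lemma coeff_one_sub_X_pow (a s : ℕ) :
    ((1 - X : ℤ[X]) ^ a).coeff s = (-1) ^ s * a.choose s := by
  have h (j : ℕ) : (-X : ℤ[X]) ^ j * 1 ^ (a - j) * (a.choose j : ℤ[X]) =
      C ((-1) ^ j * (a.choose j : ℤ)) * X ^ j := by
    rw [neg_pow, map_mul, map_pow, map_neg, map_one, map_natCast]
    ring
  rw [sub_eq_add_neg, add_comm, add_pow, finsetSum_coeff]
  simp_rw [h, coeff_C_mul_X_pow]
  rw [sum_ite_eq]
  split_ifs with hs
  · rfl
  · rw [mem_range, not_lt] at hs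
    rw [Nat.choose_eq_zero_of_lt hs, Nat.cast_zero, mul_zero]

lemma coeff_one_sub_X_sq_pow_mul (a k : ℕ) (q : ℤ[X]) :
    ((1 - X ^ 2) ^ a * q).coeff k = ∑ j ∈ range (a + 1),
      (-1) ^ j * (a.choose j : ℤ) * (if 2 * j ≤ k then q.coeff (k - 2 * j) else 0) := by
  have h (j : ℕ) : (-X ^ 2 : ℤ[X]) ^ j * 1 ^ (a - j) * (a.choose j : ℤ[X]) =
      C ((-1) ^ j * (a.choose j : ℤ)) * X ^ (2 * j) := by
    rw [neg_pow, map_mul, map_pow, map_neg, map_one, map_natCast, pow_mul]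
    ring
  rw [sub_eq_add_neg, add_comm, add_pow, sum_mul, finsetSum_coeff]
  simp_rw [h, mul_assoc, coeff_C_mul, coeff_X_pow_mul', ← mul_assoc]

lemma choose_mul_choose_le_pow {a d n j k : ℕ} (ha : a ≤ n) (hd : d ≤ n) (hj : 1 ≤ j)
    (hjk : 2 * j ≤ k) : a.choose j * d.choose (k - 2 * j) ≤ n ^ (k - 1) :=
  calc a.choose j * d.choose (k - 2 * j) ≤ n ^ j * n ^ (k - 2 * j) :=
        Nat.mul_le_mul ((a.choose_le_pow j).trans (Nat.pow_le_pow_left ha j))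
          ((d.choose_le_pow _).trans (Nat.pow_le_pow_left hd _))
    _ = n ^ (k - j) := by rw [← pow_add]; congr 1; omega
    _ ≤ n ^ (k - 1) := by
        rcases n.eq_zero_or_pos with rfl | hn
        · rw [zero_pow (by omega)]
          exact Nat.zero_le _
        · exact Nat.pow_le_pow_right hn (by omega)

lemma alternating_sum_choose_le {a d n : ℕ} (ha : a ≤ n) (hd : d ≤ n) (k : ℕ) :
    ∑ j ∈ range (a + 1),
        (-1) ^ j * (a.choose j : ℤ) * (if 2 * j ≤ k then (d.choose (k - 2 * j) : ℤ) else 0)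
      ≤ d.choose k + k * n ^ (k - 1) := by
  have hterm : ∀ i ∈ range a, (-1) ^ (i + 1) * (a.choose (i + 1) : ℤ) *
      (if 2 * (i + 1) ≤ k then (d.choose (k - 2 * (i + 1)) : ℤ) else 0)
        ≤ if i < k then (n : ℤ) ^ (k - 1) else 0 := by
    intro i _
    split_ifs with hik hi
    · calc (-1) ^ (i + 1) * (a.choose (i + 1) : ℤ) * d.choose (k - 2 * (i + 1))
            ≤ a.choose (i + 1) * d.choose (k - 2 * (i + 1)) := by
              rw [mul_assoc]
              exact (le_abs_self _).trans (by simp [abs_mul])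
          _ ≤ n ^ (k - 1) := mod_cast choose_mul_choose_le_pow ha hd le_add_self hik
    · omega
    · simp
    · simp
  have hcount : ((range a).filter (· < k)).card ≤ k :=
    (card_le_card fun i hi ↦ mem_range.2 (mem_filter.1 hi).2).trans_eq (card_range k)
  rw [sum_range_succ', add_comm]
  simp only [pow_zero, Nat.choose_zero_right, Nat.cast_one, mul_one, one_mul, mul_zero,
    Nat.sub_zero, if_pos (Nat.zero_le k)]
  gcongr
  calc _ ≤ ∑ i ∈ range a, if i < k then (n : ℤ) ^ (k - 1) else 0 := sum_le_sum hterm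
    _ = ((range a).filter (· < k)).card * (n : ℤ) ^ (k - 1) := by
        rw [← sum_filter, sum_const, nsmul_eq_mul]
    _ ≤ k * n ^ (k - 1) := by gcongr

lemma Nat.descFactorial_mul_pow_le {d n : ℕ} (h : d ≤ n) :
    ∀ k, d.descFactorial k * n ^ k ≤ n.descFactorial k * d ^ k
  | 0 => by simp
  | k + 1 => by
    have hstep : (d - k) * n ≤ (n - k) * d := by
      rw [Nat.sub_mul, Nat.sub_mul, mul_comm n d]
      exact Nat.sub_le_sub_left (Nat.mul_le_mul_left k h) _
    calc d.descFactorial (k + 1) * n ^ (k + 1)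
        = (d - k) * n * (d.descFactorial k * n ^ k) := by rw [Nat.descFactorial_succ]; ring
      _ ≤ (n - k) * d * (n.descFactorial k * d ^ k) :=
          Nat.mul_le_mul hstep (Nat.descFactorial_mul_pow_le h k)
      _ = n.descFactorial (k + 1) * d ^ (k + 1) := by rw [Nat.descFactorial_succ]; ring

lemma Nat.choose_mul_pow_le {d n : ℕ} (h : d ≤ n) (k : ℕ) :
    d.choose k * n ^ k ≤ n.choose k * d ^ k := by
  refine Nat.le_of_mul_le_mul_left ?_ k.factorial_pos
  simpa only [← mul_assoc, ← Nat.descFactorial_eq_factorial_mul_choose] using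
    Nat.descFactorial_mul_pow_le h k

lemma Nat.pow_le_two_pow_mul_factorial_mul_choose {n k : ℕ} (h : 2 * k ≤ n) :
    n ^ k ≤ 2 ^ k * k.factorial * n.choose k :=
  calc n ^ k ≤ (2 * (n + 1 - k)) ^ k := Nat.pow_le_pow_left (by omega) k
    _ = 2 ^ k * (n + 1 - k) ^ k := mul_pow _ _ _
    _ ≤ 2 ^ k * (k.factorial * n.choose k) := by
        rw [← Nat.descFactorial_eq_factorial_mul_choose]
        exact Nat.mul_le_mul_left _ (n.pow_sub_le_descFactorial k)
    _ = 2 ^ k * k.factorial * n.choose k := (mul_assoc _ _ _).symm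

lemma Real.one_add_div_pow_le_exp {c : ℝ} (hc : 0 ≤ c) {L n : ℕ} (hL : L ≤ n) :
    (1 + c / n) ^ L ≤ exp c :=
  calc (1 + c / n) ^ L ≤ exp (c / n) ^ L := by
        gcongr
        linarith [add_one_le_exp (c / n)]
    _ = exp (c * (L / n)) := by rw [← exp_nat_mul]; ring_nf
    _ ≤ exp c := by
        gcongr
        exact mul_le_of_le_one_right hc (div_le_one_of_le₀ (mod_cast hL) n.cast_nonneg)

namespace omegaW

lemma eq_coeff (n m k : ℕ) :
    omegaW n m k = ((1 - X : ℤ[X]) ^ m * (1 + X) ^ (n - m)).coeff k := by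
  rw [coeff_mul, Nat.sum_antidiagonal_eq_sum_range_succ
    (fun i j ↦ ((1 - X : ℤ[X]) ^ m).coeff i * ((1 + X : ℤ[X]) ^ (n - m)).coeff j)]
  simp only [omegaW, coeff_one_sub_X_pow, coeff_one_add_X_pow]

lemma symm {n m : ℕ} (hm : m ≤ n) (k : ℕ) : omegaW n (n - m) k = (-1) ^ k * omegaW n m k := by
  rw [omegaW, omegaW, Nat.sub_sub_self hm, mul_sum, ← sum_range_reflect]
  refine sum_congr rfl fun s hs ↦ ?_
  obtain ⟨t, rfl⟩ := Nat.exists_eq_add_of_le (Nat.lt_succ_iff.mp (mem_range.mp hs))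
  rw [Nat.add_sub_cancel, Nat.add_sub_cancel_left, Nat.add_sub_cancel, pow_add]
  ring_nf
  simp

lemma abs_le_choose {n m : ℕ} (hm : m ≤ n) (k : ℕ) : |omegaW n m k| ≤ n.choose k := by
  have vandermonde : (n.choose k : ℤ) =
      ∑ s ∈ range (k + 1), (m.choose s : ℤ) * (n - m).choose (k - s) := by
    rw [← Nat.add_sub_cancel' hm, Nat.add_choose_eq, Nat.add_sub_cancel_left,
      Nat.sum_antidiagonal_eq_sum_range_succ (fun i j ↦ m.choose i * (n - m).choose j)]
    push_cast
    rfl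
  rw [vandermonde, omegaW]
  refine (abs_sum_le_sum_abs _ _).trans_eq (sum_congr rfl fun s _ ↦ ?_)
  simp [abs_mul]

lemma eq_sum_of_two_mul_le {n m : ℕ} (h : 2 * m ≤ n) (k : ℕ) :
    omegaW n m k = ∑ j ∈ range (m + 1), (-1) ^ j * (m.choose j : ℤ) *
      (if 2 * j ≤ k then ((n - 2 * m).choose (k - 2 * j) : ℤ) else 0) := by
  have hsplit : n - m = m + (n - 2 * m) := by omega
  have hpoly :
      (1 - X : ℤ[X]) ^ m * (1 + X) ^ (n - m) = (1 - X ^ 2) ^ m * (1 + X) ^ (n - 2 * m) := by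
    rw [hsplit, pow_add, ← mul_assoc, ← mul_pow]
    ring
  simp only [eq_coeff, hpoly, coeff_one_sub_X_sq_pow_mul, coeff_one_add_X_pow]

lemma le_of_two_mul_le {n m : ℕ} (h : 2 * m ≤ n) (k : ℕ) :
    omegaW n m k ≤ (n - 2 * m).choose k + k * n ^ (k - 1) := by
  rw [eq_sum_of_two_mul_le h]
  exact alternating_sum_choose_le (by omega) (by omega) k

lemma one_add_div_choose_le {n m k : ℕ} (hm : 2 * m ≤ n) (hn : 0 < n) (hk : 2 * k ≤ n) :
    1 + (omegaW n m k : ℝ) / n.choose k ≤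
      (1 + (1 - 2 * (m : ℝ) / n) ^ k) * (1 + k * k.factorial * 2 ^ k / n) := by
  set d := n - 2 * m
  have hnR : (0 : ℝ) < n := mod_cast hn
  have hchoose : (0 : ℝ) < n.choose k := mod_cast Nat.choose_pos (by omega)
  have hx : (d : ℝ) / n = 1 - 2 * (m : ℝ) / n := by
    rw [Nat.cast_sub hm]
    field_simp
    push_cast
    ring
  have hratio : (d.choose k : ℝ) / n.choose k ≤ (1 - 2 * (m : ℝ) / n) ^ k := by
    rw [← hx, div_pow, div_le_div_iff₀ hchoose (by positivity), mul_comm _ (n.choose k : ℝ)]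
    exact_mod_cast Nat.choose_mul_pow_le (Nat.sub_le n (2 * m)) k
  have herr : (k * n ^ (k - 1) : ℝ) / n.choose k ≤ k * k.factorial * 2 ^ k / n := by
    rw [div_le_div_iff₀ hchoose hnR]
    have hpow : k * n ^ (k - 1) * n = k * n ^ k := by
      rcases k with _ | k
      · simp
      · rw [Nat.add_sub_cancel, mul_assoc, ← pow_succ]
    have := Nat.mul_le_mul_left k (Nat.pow_le_two_pow_mul_factorial_mul_choose hk)
    exact_mod_cast (hpow.trans_le this).trans_eq (by ring)
  have hω : (omegaW n m k : ℝ) ≤ d.choose k + k * n ^ (k - 1) := mod_cast le_of_two_mul_le hm k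
  have hx0 : 0 ≤ (1 - 2 * (m : ℝ) / n) ^ k := by rw [← hx]; positivity
  have hc0 : 0 ≤ (k * k.factorial * 2 ^ k / n : ℝ) := by positivity
  calc 1 + (omegaW n m k : ℝ) / n.choose k
      ≤ 1 + ((d.choose k : ℝ) / n.choose k + (k * n ^ (k - 1) : ℝ) / n.choose k) := by
        rw [← add_div]
        gcongr
    _ ≤ 1 + ((1 - 2 * (m : ℝ) / n) ^ k + k * k.factorial * 2 ^ k / n) := by gcongr
    _ ≤ (1 + (1 - 2 * (m : ℝ) / n) ^ k) * (1 + k * k.factorial * 2 ^ k / n) := by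
        nlinarith [mul_nonneg hx0 hc0]

lemma abs_one_add_div_choose_pow_le {n m k L : ℕ} (hm : 2 * m ≤ n) (hn : 0 < n)
    (hk : 2 * k ≤ n) (hL : L ≤ n) :
    |1 + (omegaW n m k : ℝ) / n.choose k| ^ L ≤
      Real.exp (k * k.factorial * 2 ^ k) * (1 + (1 - 2 * (m : ℝ) / n) ^ k) ^ L := by
  have hchoose : (0 : ℝ) < n.choose k := mod_cast Nat.choose_pos (by omega)
  have hbase : 0 ≤ 1 + (omegaW n m k : ℝ) / n.choose k := by
    have hω : -(n.choose k : ℝ) ≤ omegaW n m k :=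
      mod_cast (abs_le.1 (abs_le_choose (by omega : m ≤ n) k)).1
    have : -1 ≤ (omegaW n m k : ℝ) / n.choose k := by
      rw [le_div_iff₀ hchoose]
      linarith
    linarith
  have hx0 : 0 ≤ 1 + (1 - 2 * (m : ℝ) / n) ^ k := by
    have : (0 : ℝ) ≤ 1 - 2 * (m : ℝ) / n := by
      rw [sub_nonneg, div_le_one₀ (mod_cast hn)]
      exact_mod_cast hm
    positivity
  rw [abs_of_nonneg hbase]
  calc (1 + (omegaW n m k : ℝ) / n.choose k) ^ L
      ≤ ((1 + (1 - 2 * (m : ℝ) / n) ^ k) * (1 + k * k.factorial * 2 ^ k / n)) ^ L := by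
        gcongr
        exact one_add_div_choose_le hm hn hk
    _ = (1 + k * k.factorial * 2 ^ k / n) ^ L * (1 + (1 - 2 * (m : ℝ) / n) ^ k) ^ L := by
        rw [mul_pow, mul_comm]
    _ ≤ Real.exp (k * k.factorial * 2 ^ k) * (1 + (1 - 2 * (m : ℝ) / n) ^ k) ^ L := by
        gcongr
        exact Real.one_add_div_pow_le_exp (by positivity) hL

end omegaW

theorem extremal_area_estimate_general (k : ℕ) :
    ∃ C : ℝ, 0 < C ∧ ∃ N : ℕ, ∀ n : ℕ, N ≤ n → ∀ L : ℕ, L ≤ n → ∀ m : ℕ, m ≤ n →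
      ((m : ℝ) - n / 2 ≤ -((n : ℝ) ^ ((1 : ℝ) - 4 / (3 * k))) ∨
        (Even k ∧ (n : ℝ) ^ ((1 : ℝ) - 4 / (3 * k)) ≤ (m : ℝ) - n / 2)) →
      |1 + (omegaW n m k : ℝ) / (n.choose k : ℝ)| ^ L ≤
        C * (1 + (1 - 2 * (m : ℝ) / n) ^ k) ^ L := by
  refine ⟨Real.exp (k * k.factorial * 2 ^ k), Real.exp_pos _, 2 * k + 1,
    fun n hN L hL m hm hcase ↦ ?_⟩
  have hn : 0 < n := by omega
  have hgap : 0 < (n : ℝ) ^ ((1 : ℝ) - 4 / (3 * k)) := Real.rpow_pos_of_pos (mod_cast hn) _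
  rcases hcase with hlow | ⟨hk, hhigh⟩
  · have hm' : 2 * m ≤ n := by
      have : (2 * m : ℝ) ≤ n := by linarith
      exact_mod_cast this
    exact omegaW.abs_one_add_div_choose_pow_le hm' hn (by omega) hL
  · have hm' : 2 * (n - m) ≤ n := by
      have : (n : ℝ) ≤ 2 * m := by linarith
      have : n ≤ 2 * m := by exact_mod_cast this
      omega
    have hflip : 1 - 2 * ((n - m : ℕ) : ℝ) / n = -(1 - 2 * (m : ℝ) / n) := by
      rw [Nat.cast_sub hm]
      field_simp
      ring
    have h := omegaW.abs_one_add_div_choose_pow_le (k := k) hm' hn (by omega) hL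
    rwa [omegaW.symm hm, hk.neg_one_pow, one_mul, hflip, hk.neg_pow] at h

/-- Extremal-area estimate: for `L ≤ n` and `m − n/2 ≤ −n^{1−4/(3k)}`, or `k`
even and `m − n/2 ≥ n^{1−4/(3k)}`,
`|1 + ω_{n,m,k}/C(n,k)|^L ≤ C (1 + (1−2m/n)^k)^L`. -/
theorem extremal_area_estimate (k : ℕ) (hk : 3 ≤ k) :
    ∃ C : ℝ, 0 < C ∧ ∃ N : ℕ, ∀ n : ℕ, N ≤ n → ∀ L : ℕ, L ≤ n → ∀ m : ℕ, m ≤ n →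
      ((m : ℝ) - n / 2 ≤ -((n : ℝ) ^ ((1 : ℝ) - 4 / (3 * k))) ∨
        (Even k ∧ (n : ℝ) ^ ((1 : ℝ) - 4 / (3 * k)) ≤ (m : ℝ) - n / 2)) →
      |1 + (omegaW n m k : ℝ) / (n.choose k : ℝ)| ^ L ≤
        C * (1 + (1 - 2 * (m : ℝ) / n) ^ k) ^ L :=
  extremal_area_estimate_general k
end

section
/- For all integers n, L, k with n ≥ k ≥ 1 and L ≥ 0, letting P_(L) be the fraction of matrices A ∈ M_{L,n,k} with rank(A) = L (maximal rank), one has P_(L) ≤ P_{n,L}(k-XOR-SAT) ≤ (1 + P_(L))/2. -/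
open Finset Filter

attribute [local instance] Classical.propDecidable

section Aux

variable {n L k : ℕ}

/-- The 0/1 matrix whose rows are the indicator vectors of the given subsets. -/
noncomputable def rowMat (R : Fin L → {S : Finset (Fin n) // S.card = k}) :
    Matrix (Fin L) (Fin n) (ZMod 2) :=
  Matrix.of fun i j => if j ∈ (R i).1 then 1 else 0

lemma rowMat_mem (R : Fin L → {S : Finset (Fin n) // S.card = k}) :
    rowMat R ∈ Mset L n k := by
  simp only [Mset, Finset.mem_filter, Finset.mem_univ, true_and]
  intro i
  have h : (Finset.univ.filter fun j : Fin n => rowMat R i j ≠ 0) = (R i).1 := by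
    ext j
    by_cases hj : j ∈ (R i).1 <;> simp [rowMat, hj]
  rw [h, (R i).2]

lemma rowMat_injective :
    Function.Injective (rowMat (n := n) (L := L) (k := k)) := by
  intro R R' h
  funext i
  apply Subtype.ext
  ext j
  have hji := congrFun (congrFun h i) j
  simp only [rowMat, Matrix.of_apply] at hji
  by_cases hj : j ∈ (R i).1 <;> by_cases hj' : j ∈ (R' i).1 <;> simp_all

lemma rowMat_surjOn (A : Matrix (Fin L) (Fin n) (ZMod 2)) (hA : A ∈ Mset L n k) :
    ∃ R : Fin L → {S : Finset (Fin n) // S.card = k}, rowMat R = A := by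
  simp only [Mset, Finset.mem_filter, Finset.mem_univ, true_and] at hA
  refine ⟨fun i => ⟨Finset.univ.filter fun j => A i j ≠ 0, hA i⟩, ?_⟩
  ext i j
  by_cases h : A i j = 0
  · simp [rowMat, h]
  · have h1 : A i j = 1 := by
      have h2 : ∀ x : ZMod 2, x = 0 ∨ x = 1 := by decide
      rcases h2 (A i j) with h' | h' <;> tauto
    simp [rowMat, h, h1]

lemma mulVec_rowMat (R : Fin L → {S : Finset (Fin n) // S.card = k})
    (I : Fin n → ZMod 2) (i : Fin L) :
    (rowMat R).mulVec I i = ∑ j ∈ (R i).1, I j := by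
  simp only [Matrix.mulVec, dotProduct, rowMat, Matrix.of_apply, ite_mul, one_mul,
    zero_mul]
  rw [Finset.sum_ite_mem, Finset.univ_inter]

lemma card_range_eq (A : Matrix (Fin L) (Fin n) (ZMod 2)) :
    (Finset.univ.filter fun b : Fin L → ZMod 2 => ∃ I, A.mulVec I = b).card
      = 2 ^ A.rank := by
  classical
  have h1 : (Finset.univ.filter fun b : Fin L → ZMod 2 => ∃ I, A.mulVec I = b).card
      = Fintype.card {b : Fin L → ZMod 2 // ∃ I, A.mulVec I = b} := by
    rw [Fintype.card_subtype]
  have e : {b : Fin L → ZMod 2 // ∃ I, A.mulVec I = b}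
      ≃ LinearMap.range A.mulVecLin :=
    Equiv.subtypeEquivRight (by
      intro b
      simp [LinearMap.mem_range, Matrix.mulVecLin_apply, eq_comm])
  rw [h1, Fintype.card_congr e]
  have := Module.card_eq_pow_finrank (K := ZMod 2) (V := LinearMap.range A.mulVecLin)
  rw [this, ZMod.card]
  rfl

lemma numSat_eq (n L k : ℕ) :
    numSat n L k = ∑ A ∈ Mset L n k, 2 ^ A.rank := by
  classical
  have h0 : numSat n L k = (Finset.univ.filter fun F : Formula n L k =>
      Satisfiable F).card := by
    rw [numSat, Nat.card_eq_fintype_card, Fintype.card_subtype]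
  rw [h0, Finset.card_filter]
  let e : Formula n L k ≃ (Fin L → {S : Finset (Fin n) // S.card = k}) × (Fin L → ZMod 2) :=
    Equiv.arrowProdEquivProdArrow _ _ _
  rw [← Equiv.sum_comp e.symm (fun F : Formula n L k => if Satisfiable F then 1 else 0)]
  rw [Fintype.sum_prod_type]
  have hsat : ∀ (R : Fin L → {S : Finset (Fin n) // S.card = k}) (b : Fin L → ZMod 2),
      Satisfiable (e.symm (R, b)) ↔ ∃ I, (rowMat R).mulVec I = b := by
    intro R b
    have he : ∀ i : Fin L, e.symm (R, b) i = (R i, b i) := fun _ => rfl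
    unfold Satisfiable
    constructor
    · rintro ⟨I, hI⟩
      refine ⟨I, funext fun i => ?_⟩
      rw [mulVec_rowMat]
      have := hI i
      rw [he i] at this
      exact this
    · rintro ⟨I, hI⟩
      refine ⟨I, fun i => ?_⟩
      rw [he i]
      rw [← mulVec_rowMat R I i, hI]
  have hstep : ∀ R : Fin L → {S : Finset (Fin n) // S.card = k},
      (∑ b : Fin L → ZMod 2, if Satisfiable (e.symm (R, b)) then 1 else 0)
        = 2 ^ (rowMat R).rank := by
    intro R
    rw [← card_range_eq (rowMat R), Finset.card_filter]
    exact Finset.sum_congr rfl fun b _ => if_congr (hsat R b) rfl rfl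
  rw [Finset.sum_congr rfl fun R _ => hstep R]
  exact Finset.sum_bij (fun R _ => rowMat R) (fun R _ => rowMat_mem R)
    (fun R _ R' _ h => rowMat_injective h)
    (fun A hA => by
      obtain ⟨R, hR⟩ := rowMat_surjOn A hA
      exact ⟨R, Finset.mem_univ R, hR⟩)
    (fun R _ => rfl)

lemma card_Mset (n L k : ℕ) : (Mset L n k).card = (n.choose k) ^ L := by
  classical
  have h : Mset L n k = Finset.image (rowMat (n := n) (L := L) (k := k)) Finset.univ := by
    ext A
    simp only [Finset.mem_image, Finset.mem_univ, true_and]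
    constructor
    · exact fun h => rowMat_surjOn A h
    · rintro ⟨R, rfl⟩; exact rowMat_mem R
  rw [h, Finset.card_image_of_injective _ rowMat_injective, Finset.card_univ,
    Fintype.card_fun, Fintype.card_finset_len, Fintype.card_fin, Fintype.card_fin]

end Aux

/-- `P_(L) ≤ P_{n,L}(k-XOR-SAT) ≤ (1 + P_(L))/2`, where `P_(L)` is the fraction
of matrices in `M_{L,n,k}` of maximal rank `L`. -/
theorem Prank_le_Psat_le (n L k : ℕ) (hk : 1 ≤ k) (hkn : k ≤ n) :
    Prank n L k L ≤ Psat n L k ∧ Psat n L k ≤ (1 + Prank n L k L) / 2 := by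
  classical
  set cL := ((Mset L n k).filter fun A => A.rank = L).card with hcL
  set cb := ((Mset L n k).filter fun A => ¬ A.rank = L).card with hcb
  have hcard : cL + cb = (n.choose k) ^ L := by
    rw [hcL, hcb, Finset.card_filter_add_card_filter_not, card_Mset]
  have h1 : cL * 2 ^ L ≤ numSat n L k := by
    rw [numSat_eq]
    calc cL * 2 ^ L
        = ∑ A ∈ (Mset L n k).filter (fun A => A.rank = L), 2 ^ A.rank := by
          rw [Finset.sum_congr rfl (fun A hA => by
            rw [(Finset.mem_filter.mp hA).2]), Finset.sum_const, smul_eq_mul]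
      _ ≤ ∑ A ∈ Mset L n k, 2 ^ A.rank :=
          Finset.sum_le_sum_of_subset (Finset.filter_subset _ _)
  have h2 : 2 * numSat n L k ≤ 2 ^ L * ((n.choose k) ^ L + cL) := by
    rw [numSat_eq, Finset.mul_sum,
      ← Finset.sum_filter_add_sum_filter_not (Mset L n k) (fun A => A.rank = L)]
    have ha : ∑ A ∈ (Mset L n k).filter (fun A => A.rank = L), 2 * 2 ^ A.rank
        = cL * (2 * 2 ^ L) := by
      rw [Finset.sum_congr rfl (fun A hA => by
        rw [(Finset.mem_filter.mp hA).2]), Finset.sum_const, smul_eq_mul]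
    have hb : ∑ A ∈ (Mset L n k).filter (fun A => ¬ A.rank = L), 2 * 2 ^ A.rank
        ≤ cb * 2 ^ L := by
      have := Finset.sum_le_card_nsmul
        ((Mset L n k).filter (fun A => ¬ A.rank = L))
        (fun A => 2 * 2 ^ A.rank) (2 ^ L) (fun A hA => by
          obtain ⟨hAm, hAne⟩ := Finset.mem_filter.mp hA
          have hle : A.rank ≤ L := Matrix.rank_le_height A
          have hlt : A.rank + 1 ≤ L := by omega
          calc 2 * 2 ^ A.rank = 2 ^ (A.rank + 1) := by ring
            _ ≤ 2 ^ L := Nat.pow_le_pow_right (by norm_num) hlt)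
      simpa [smul_eq_mul] using this
    calc (∑ A ∈ (Mset L n k).filter (fun A => A.rank = L), 2 * 2 ^ A.rank)
          + ∑ A ∈ (Mset L n k).filter (fun A => ¬ A.rank = L), 2 * 2 ^ A.rank
        ≤ cL * (2 * 2 ^ L) + cb * 2 ^ L := by
          rw [ha]; exact Nat.add_le_add_left hb _
      _ = 2 ^ L * ((cL + cb) + cL) := by ring
      _ = 2 ^ L * ((n.choose k) ^ L + cL) := by rw [hcard]
  have hC : (0:ℝ) < (n.choose k : ℝ) := by exact_mod_cast Nat.choose_pos hkn
  have hCL : (0:ℝ) < (n.choose k : ℝ) ^ L := pow_pos hC L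
  have hden : ((2:ℝ) * (n.choose k : ℝ)) ^ L = 2 ^ L * (n.choose k : ℝ) ^ L :=
    mul_pow _ _ _
  have h1R : (cL:ℝ) * 2 ^ L ≤ (numSat n L k : ℝ) := by exact_mod_cast h1
  have h2R : 2 * (numSat n L k : ℝ)
      ≤ 2 ^ L * ((n.choose k : ℝ) ^ L + cL) := by exact_mod_cast h2
  constructor
  · simp only [Prank, Psat, ← hcL]
    rw [hden, div_le_div_iff₀ hCL (by positivity)]
    nlinarith [hCL.le]
  · simp only [Prank, Psat, ← hcL]
    rw [hden, div_le_div_iff₀ (by positivity) (by norm_num : (0:ℝ) < 2)]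
    have hexp : (1 + (cL:ℝ) / (n.choose k : ℝ) ^ L) * (2 ^ L * (n.choose k : ℝ) ^ L)
        = 2 ^ L * ((n.choose k : ℝ) ^ L + cL) := by
      field_simp
    rw [hexp]
    linarith
end

section
/- For all integers n, L ≥ 0 and every matrix A ∈ M_{L,n,3}, one has rank(A) + T(A) + 2·U(A) + V(A) ≤ n, where rank(A) is the rank of A over ZMod 2. In particular, if T(A) + 2·U(A) + V(A) > n − L then A does not have maximal rank L. -/
open Finset Filter

attribute [local instance] Classical.propDecidable

/-- The weight of column `j` of `A`: the number of nonzero entries of the column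
(over `ZMod 2` this is the column sum computed in `ℕ`). -/
def colW {L n : ℕ} (A : Matrix (Fin L) (Fin n) (ZMod 2)) (j : Fin n) : ℕ :=
  (Finset.univ.filter fun i : Fin L => A i j ≠ 0).card

/-- The `3`-weight of row `i` of `A`: the multiset of the column weights of the
columns in the support of row `i`. -/
def rowW {L n : ℕ} (A : Matrix (Fin L) (Fin n) (ZMod 2)) (i : Fin L) : Multiset ℕ :=
  (Finset.univ.filter fun j : Fin n => A i j ≠ 0).val.map (colW A)

/-- `T(A)`: the number of all-zero columns of `A`. -/
def Tcount {L n : ℕ} (A : Matrix (Fin L) (Fin n) (ZMod 2)) : ℕ :=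
  (Finset.univ.filter fun j : Fin n => ∀ i : Fin L, A i j = 0).card

/-- `U(A)`: the number of rows whose `3`-weight is `{1,1,1}`. -/
def Ucount {L n : ℕ} (A : Matrix (Fin L) (Fin n) (ZMod 2)) : ℕ :=
  (Finset.univ.filter fun i : Fin L => rowW A i = ({1, 1, 1} : Multiset ℕ)).card

/-- `V(A)`: the number of rows whose `3`-weight is `{1,1,α}` with `α ≥ 2`. -/
noncomputable def Vcount {L n : ℕ} (A : Matrix (Fin L) (Fin n) (ZMod 2)) : ℕ :=
  (Finset.univ.filter fun i : Fin L =>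
    ∃ a : ℕ, 2 ≤ a ∧ rowW A i = ({1, 1, a} : Multiset ℕ)).card

/-- For `A ∈ M_{L,n,3}`, `rank(A) + T(A) + 2U(A) + V(A) ≤ n`; in particular if
`T(A) + 2U(A) + V(A) > n − L` then `A` is not of maximal rank `L`. -/
theorem rank_add_TUV_le (n L : ℕ) (A : Matrix (Fin L) (Fin n) (ZMod 2))
    (hA : A ∈ Mset L n 3) :
    A.rank + Tcount A + 2 * Ucount A + Vcount A ≤ n ∧
    ((n : ℤ) - (L : ℤ) < (Tcount A : ℤ) + 2 * (Ucount A : ℤ) + (Vcount A : ℤ) →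
      A.rank ≠ L) := by
  classical
  have hsupp : ∀ i : Fin L, (Finset.univ.filter fun j : Fin n => A i j ≠ 0).card = 3 := by
    have h := hA
    simp only [Mset, Finset.mem_filter, Finset.mem_univ, true_and] at h
    exact h
  set c : Fin n → (Fin L → ZMod 2) := fun j i => A i j with hc
  set e : Fin L → (Fin L → ZMod 2) := fun i => Pi.single i 1 with he
  have he0 : ∀ i, e i ≠ 0 := by
    intro i h
    have := congrFun h i
    simp [he] at this
  have heinj : Function.Injective e := by
    intro i j h
    by_contra hne
    have := congrFun h i
    rw [he] at this
    simp only [Pi.single_eq_same, Pi.single_eq_of_ne hne] at this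
    exact one_ne_zero this
  have hone : ∀ a : ZMod 2, a ≠ 0 → a = 1 := by decide
  have hcol1 : ∀ (i : Fin L) (j : Fin n), A i j ≠ 0 → colW A j = 1 → c j = e i := by
    intro i j hij hw
    obtain ⟨x, hx⟩ := Finset.card_eq_one.mp hw
    have hix : i ∈ (Finset.univ.filter fun i : Fin L => A i j ≠ 0) := by
      simp [hij]
    rw [hx, Finset.mem_singleton] at hix
    funext i'
    by_cases h' : i' = i
    · subst h'; simp [hc, he, hone _ hij]
    · have hz : A i' j = 0 := by
        by_contra hne
        have : i' ∈ (Finset.univ.filter fun i : Fin L => A i j ≠ 0) := by simp [hne]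
        rw [hx, Finset.mem_singleton] at this
        exact h' (this.trans hix.symm)
      simp [hc, he, hz, Pi.single_eq_of_ne h']
  have hmemW : ∀ (i : Fin L) (j : Fin n), A i j ≠ 0 → colW A j ∈ rowW A i := by
    intro i j hij
    exact Multiset.mem_map_of_mem _
      (by simp [Finset.mem_filter, hij] :
        j ∈ (Finset.univ.filter fun j : Fin n => A i j ≠ 0))
  set K : Finset (Fin n) :=
    Finset.univ.filter (fun j => c j ≠ 0 ∧ ∀ j' : Fin n, j' < j → c j' ≠ c j) with hK
  set Z : Finset (Fin n) := Finset.univ.filter (fun j => c j = 0) with hZ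
  set SU : Finset (Fin L) :=
    Finset.univ.filter (fun i => rowW A i = ({1,1,1} : Multiset ℕ)) with hSU
  set SV : Finset (Fin L) :=
    Finset.univ.filter
      (fun i => ∃ a : ℕ, 2 ≤ a ∧ rowW A i = ({1,1,a} : Multiset ℕ)) with hSV
  set F : Fin L → Finset (Fin n) :=
    fun i => Finset.univ.filter (fun j => c j = e i) with hF
  -- identifications with Tcount / Ucount / Vcount
  have hTZ : Z.card = Tcount A := by
    rw [hZ, Tcount]
    congr 1
    apply Finset.filter_congr
    intro j _
    constructor
    · intro h i; exact congrFun h i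
    · intro h; funext i; exact h i
  have hUc : Ucount A = SU.card := by rw [hSU]; rfl
  have hVc : Vcount A = SV.card := by rw [hSV]; rfl
  -- big fibers
  have hFU : ∀ i ∈ SU, 3 ≤ (F i).card := by
    intro i hi
    rw [hSU, Finset.mem_filter] at hi
    have hsub : (Finset.univ.filter fun j : Fin n => A i j ≠ 0) ⊆ F i := by
      intro j hj
      rw [Finset.mem_filter] at hj
      have hw : colW A j ∈ rowW A i := hmemW i j hj.2
      rw [hi.2] at hw
      have h1 : colW A j = 1 := by simpa using hw
      rw [hF, Finset.mem_filter]
      exact ⟨Finset.mem_univ _, hcol1 i j hj.2 h1⟩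
    calc 3 = (Finset.univ.filter fun j : Fin n => A i j ≠ 0).card := (hsupp i).symm
      _ ≤ (F i).card := Finset.card_le_card hsub
  have hFV : ∀ i ∈ SV, 2 ≤ (F i).card := by
    intro i hi
    rw [hSV, Finset.mem_filter] at hi
    obtain ⟨a, ha, hw⟩ := hi.2
    have hcount :
        ((Finset.univ.filter fun j : Fin n => A i j ≠ 0).filter
          fun j => 1 = colW A j).card = 2 := by
      have h1 : Multiset.count 1 (rowW A i) =
          ((Finset.univ.filter fun j : Fin n => A i j ≠ 0).filter
            fun j => 1 = colW A j).card := by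
        rw [rowW, Multiset.count_map]; rfl
      rw [hw] at h1
      have hane : ¬ (1 : ℕ) = a := by omega
      rw [← h1]
      simp [Multiset.count_cons, hane]
    have hsub : ((Finset.univ.filter fun j : Fin n => A i j ≠ 0).filter
        fun j => 1 = colW A j) ⊆ F i := by
      intro j hj
      rw [Finset.mem_filter, Finset.mem_filter] at hj
      rw [hF, Finset.mem_filter]
      exact ⟨Finset.mem_univ _, hcol1 i j hj.1.2 hj.2.symm⟩
    calc 2 = _ := hcount.symm
      _ ≤ (F i).card := Finset.card_le_card hsub
  -- disjointness
  have hFdisj : ∀ i1 i2 : Fin L, i1 ≠ i2 → Disjoint (F i1) (F i2) := by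
    intro i1 i2 hne
    rw [Finset.disjoint_left]
    intro j h1 h2
    rw [hF, Finset.mem_filter] at h1 h2
    exact hne (heinj (h1.2.symm.trans h2.2))
  have hZF : ∀ i, Disjoint Z (F i) := by
    intro i
    rw [Finset.disjoint_left]
    intro j h1 h2
    rw [hZ, Finset.mem_filter] at h1
    rw [hF, Finset.mem_filter] at h2
    exact he0 i (h2.2.symm.trans h1.2)
  have hKF : ∀ i, (K ∩ F i).card ≤ 1 := by
    intro i
    rw [Finset.card_le_one]
    intro j1 h1 j2 h2
    rw [Finset.mem_inter, hK, hF, Finset.mem_filter, Finset.mem_filter] at h1 h2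
    by_contra hne
    have hcc : c j1 = c j2 := h1.2.2.trans h2.2.2.symm
    rcases lt_or_gt_of_ne hne with h | h
    · exact h2.1.2.2 j1 h hcc
    · exact h1.1.2.2 j2 h hcc.symm
  have hKZ : Disjoint K Z := by
    rw [Finset.disjoint_left]
    intro j h1 h2
    rw [hK, Finset.mem_filter] at h1
    rw [hZ, Finset.mem_filter] at h2
    exact h1.2.1 h2.2
  -- rank bound
  have hlead : ∀ j : Fin n, c j ≠ 0 → ∃ j0 ∈ K, c j0 = c j := by
    intro j h0
    have hjS : j ∈ Finset.univ.filter (fun j' : Fin n => c j' = c j) := by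
      simp
    have hne : (Finset.univ.filter (fun j' : Fin n => c j' = c j)).Nonempty := ⟨j, hjS⟩
    have hmem := Finset.min'_mem _ hne
    rw [Finset.mem_filter] at hmem
    refine ⟨_, ?_, hmem.2⟩
    rw [hK, Finset.mem_filter]
    refine ⟨Finset.mem_univ _, by rw [hmem.2]; exact h0, ?_⟩
    intro j' hlt hcontra
    have hj'S : j' ∈ Finset.univ.filter (fun j' : Fin n => c j' = c j) := by
      rw [Finset.mem_filter]
      exact ⟨Finset.mem_univ _, hcontra.trans hmem.2⟩
    exact absurd (Finset.min'_le _ j' hj'S) (not_le.mpr hlt)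
  have hrank : A.rank ≤ K.card := by
    rw [Matrix.rank_eq_finrank_span_cols]
    have h1 : Submodule.span (ZMod 2) (Set.range A.transpose) ≤
        Submodule.span (ZMod 2) ((K.image A.transpose : Finset _) : Set (Fin L → ZMod 2)) := by
      apply Submodule.span_le.mpr
      rintro _ ⟨j, rfl⟩
      by_cases h0 : c j = 0
      · have hA0 : A.transpose j = 0 := h0
        rw [hA0]; exact Submodule.zero_mem _
      · obtain ⟨j0, hj0, hEq⟩ := hlead j h0
        have hm : A.transpose j ∈ K.image A.transpose := Finset.mem_image.mpr ⟨j0, hj0, hEq⟩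
        exact Submodule.subset_span (Finset.mem_coe.mpr hm)
    calc Module.finrank (ZMod 2) (Submodule.span (ZMod 2) (Set.range A.transpose))
        ≤ Module.finrank (ZMod 2)
            (Submodule.span (ZMod 2) ((K.image A.transpose : Finset _) : Set (Fin L → ZMod 2))) :=
          Submodule.finrank_mono h1
      _ ≤ (K.image A.transpose).card := finrank_span_finset_le_card _
      _ ≤ K.card := Finset.card_image_le
  -- counting
  set D : Finset (Fin n) := (SU ∪ SV).biUnion F with hD
  have hUV : Disjoint SU SV := by
    rw [Finset.disjoint_left]
    intro i h1 h2
    rw [hSU, Finset.mem_filter] at h1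
    rw [hSV, Finset.mem_filter] at h2
    obtain ⟨a, ha, hw⟩ := h2.2
    have hmem : a ∈ ({1,1,1} : Multiset ℕ) := by
      rw [← h1.2, hw]; simp
    simp at hmem; omega
  have hDcard : SU.card * 3 + SV.card * 2 ≤ D.card := by
    rw [hD, Finset.card_biUnion (fun x _ y _ hxy => hFdisj x y hxy),
      Finset.sum_union hUV]
    have h1 : SU.card * 3 ≤ ∑ i ∈ SU, (F i).card := by
      calc SU.card * 3 = ∑ _i ∈ SU, 3 := by rw [Finset.sum_const, smul_eq_mul]
        _ ≤ ∑ i ∈ SU, (F i).card := Finset.sum_le_sum hFU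
    have h2 : SV.card * 2 ≤ ∑ i ∈ SV, (F i).card := by
      calc SV.card * 2 = ∑ _i ∈ SV, 2 := by rw [Finset.sum_const, smul_eq_mul]
        _ ≤ ∑ i ∈ SV, (F i).card := Finset.sum_le_sum hFV
    omega
  have hZD : Disjoint Z D := by
    rw [hD, Finset.disjoint_biUnion_right]
    exact fun i _ => hZF i
  have hBcard : (Z ∪ D).card = Z.card + D.card := Finset.card_union_of_disjoint hZD
  have hKB : (K ∩ (Z ∪ D)).card ≤ SU.card + SV.card := by
    have hsub : K ∩ (Z ∪ D) ⊆ (SU ∪ SV).biUnion (fun i => K ∩ F i) := by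
      intro j hj
      rw [Finset.mem_inter] at hj
      rcases Finset.mem_union.mp hj.2 with h | h
      · exact absurd h (Finset.disjoint_left.mp hKZ hj.1)
      · rw [hD, Finset.mem_biUnion] at h
        obtain ⟨i, hi, hji⟩ := h
        exact Finset.mem_biUnion.mpr ⟨i, hi, Finset.mem_inter.mpr ⟨hj.1, hji⟩⟩
    calc (K ∩ (Z ∪ D)).card ≤ ((SU ∪ SV).biUnion fun i => K ∩ F i).card :=
          Finset.card_le_card hsub
      _ ≤ ∑ i ∈ SU ∪ SV, (K ∩ F i).card := Finset.card_biUnion_le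
      _ ≤ ∑ _i ∈ SU ∪ SV, 1 := Finset.sum_le_sum (fun i _ => hKF i)
      _ = (SU ∪ SV).card := by simp
      _ ≤ SU.card + SV.card := Finset.card_union_le _ _
  have hKsplit : (K \ (Z ∪ D)).card + (K ∩ (Z ∪ D)).card = K.card :=
    Finset.card_sdiff_add_card_inter _ _
  have htotal : (K \ (Z ∪ D)).card + (Z ∪ D).card ≤ n := by
    rw [Finset.card_sdiff_add_card]
    simpa using Finset.card_le_univ (K ∪ (Z ∪ D))
  have key : A.rank + Tcount A + 2 * Ucount A + Vcount A ≤ n := by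
    omega
  refine ⟨key, fun hlt hrnk => ?_⟩
  rw [hrnk] at key
  omega
end

section
/- For all integers n ≥ 6 and L ≥ 1, the following exact counting identities hold over M_{L,n,3}: (i) ∑_{A ∈ M_{L,n,3}} T(A) = n · C(n−1,3)^L; (ii) ∑_{A ∈ M_{L,n,3}} U(A) = L · C(n,3) · C(n−3,3)^{L−1}; (iii) ∑_{A ∈ M_{L,n,3}} V(A) = L · C(n,2) · (n−2) · (C(n−2,3)^{L−1} − C(n−3,3)^{L−1}). -/
open Finset Filter

attribute [local instance] Classical.propDecidable

/-!
Encode a matrix of `Mset L n k` by the family of supports of its rows, i.e. a point of the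
product of `L` copies of the `k`-subsets of `Fin n`. Each sum is then a double count. A column
is empty in `C(n-1,k)^L` families. For `U` and `V`, fix a row `i` and its support `S`: a set
`t ⊆ S` consists of columns met by no other row exactly when the other `L - 1` rows avoid `t`,
which happens in `C(n-|t|,k)^(L-1)` families. Row `i` has exactly `k - 1` such columns iff they
contain some `(k-1)`-subset `T ⊆ S` but not all of `S`; this gives
`k (C(n-k+1,k)^(L-1) - C(n-k,k)^(L-1))` families per support. For `k = 3`, the identity
`3 C(n,3) = C(n,2) (n-2)` puts `V` in the stated form.
-/

lemma Finset.eq_iff_subset_and_not_superset {α : Type*} {s t u : Finset α} (hs : s ⊆ u)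
    (htu : #t + 1 = #u) : s = t ↔ t ⊆ s ∧ ¬u ⊆ s := by
  constructor
  · rintro rfl
    exact ⟨subset_rfl, fun h => by have := card_le_card h; omega⟩
  · rintro ⟨hts, hus⟩
    have := card_lt_card (ssubset_of_subset_not_subset hs hus)
    exact (eq_of_subset_of_card_le hts (by omega)).symm

lemma Finset.card_filter_and_not_of_imp {α : Type*} (s : Finset α) {p q : α → Prop}
    [DecidablePred p] [DecidablePred q] (h : ∀ x ∈ s, q x → p x) :
    #{x ∈ s | p x ∧ ¬q x} = #{x ∈ s | p x} - #{x ∈ s | q x} := by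
  classical
  rw [filter_and_not, card_sdiff_of_subset (monotone_filter_right s h)]

lemma Finset.sum_card_filter_comm {α β : Type*} (s : Finset α) (t : Finset β)
    (r : α → β → Prop) [∀ a b, Decidable (r a b)] :
    ∑ a ∈ s, #{b ∈ t | r a b} = ∑ b ∈ t, #{a ∈ s | r a b} :=
  sum_card_bipartiteAbove_eq_sum_card_bipartiteBelow r

lemma Finset.map_val_eq_replicate_card_iff {α β : Type*} (s : Finset α) (w : α → β)
    (c : β) :
    s.val.map w = Multiset.replicate #s c ↔ ∀ j ∈ s, w j = c := by
  simp [Multiset.eq_replicate]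

lemma Multiset.exists_two_le_eq_one_one_iff_count {m : Multiset ℕ} (hcard : m.card = 3)
    (h0 : 0 ∉ m) : (∃ a, 2 ≤ a ∧ m = {1, 1, a}) ↔ m.count 1 = 2 := by
  constructor
  · rintro ⟨a, ha, rfl⟩
    simp [show 1 ≠ a by omega]
  · intro h1
    have hones : m.filter (· = 1) = {1, 1} := by
      rw [Multiset.filter_eq', h1]; rfl
    have hrest : (m.filter fun a => ¬a = 1).card = 1 := by
      have := congrArg Multiset.card (Multiset.filter_add_not (· = 1) m)
      rw [Multiset.card_add, hones, hcard] at this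
      simp only [Multiset.card_pair] at this
      omega
    obtain ⟨a, ha⟩ := Multiset.card_eq_one.mp hrest
    have ha_mem : a ∈ m.filter fun a => ¬a = 1 := by simp [ha]
    obtain ⟨ham, ha1⟩ := Multiset.mem_filter.mp ha_mem
    refine ⟨a, by have := ne_of_mem_of_not_mem ham h0; omega, ?_⟩
    rw [← Multiset.filter_add_not (· = 1) m, hones, ha]
    rfl

section SupportFamilies

variable {L n k : ℕ}

def supportFamilies (L n k : ℕ) : Finset (Fin L → Finset (Fin n)) :=
  Fintype.piFinset fun _ => (univ : Finset (Fin n)).powersetCard k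

lemma mem_supportFamilies {f : Fin L → Finset (Fin n)} :
    f ∈ supportFamilies L n k ↔ ∀ i, #(f i) = k := by
  simp [supportFamilies]

def ofSupports (f : Fin L → Finset (Fin n)) : Matrix (Fin L) (Fin n) (ZMod 2) :=
  Matrix.of fun i j => if j ∈ f i then 1 else 0

lemma ofSupports_ne_zero_iff {f : Fin L → Finset (Fin n)} {i : Fin L} {j : Fin n} :
    ofSupports f i j ≠ 0 ↔ j ∈ f i := by
  by_cases h : j ∈ f i <;> simp [ofSupports, h]

lemma filter_ofSupports_ne_zero (f : Fin L → Finset (Fin n)) (i : Fin L) :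
    ({j | ofSupports f i j ≠ 0} : Finset (Fin n)) = f i := by
  ext j; simp [ofSupports_ne_zero_iff]

lemma ofSupports_injective : Function.Injective (ofSupports (L := L) (n := n)) := by
  intro f g h
  funext i
  rw [← filter_ofSupports_ne_zero f i, ← filter_ofSupports_ne_zero g i, h]

lemma Mset_eq_map_ofSupports :
    Mset L n k = (supportFamilies L n k).map ⟨ofSupports, ofSupports_injective⟩ := by
  ext A
  simp only [Mset, mem_filter, mem_univ, true_and, Finset.mem_map, Function.Embedding.coeFn_mk]
  constructor
  · intro hA
    refine ⟨fun i => {j | A i j ≠ 0}, mem_supportFamilies.mpr hA, ?_⟩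
    ext i j
    by_cases h : A i j = 0
    · simp [ofSupports, h]
    · simp [ofSupports, (show ∀ a : ZMod 2, a ≠ 0 → a = 1 by decide) _ h]
  · rintro ⟨f, hf, rfl⟩ i
    rw [filter_ofSupports_ne_zero]
    exact mem_supportFamilies.mp hf i

def colDegree (f : Fin L → Finset (Fin n)) (j : Fin n) : ℕ :=
  #{i | j ∈ f i}

def soleCols (f : Fin L → Finset (Fin n)) (i : Fin L) : Finset (Fin n) :=
  {j ∈ f i | colDegree f j = 1}

lemma soleCols_subset (f : Fin L → Finset (Fin n)) (i : Fin L) : soleCols f i ⊆ f i :=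
  filter_subset _ _

lemma colW_ofSupports (f : Fin L → Finset (Fin n)) : colW (ofSupports f) = colDegree f := by
  funext j
  simp only [colW, colDegree, ofSupports_ne_zero_iff]

lemma rowW_ofSupports (f : Fin L → Finset (Fin n)) (i : Fin L) :
    rowW (ofSupports f) i = (f i).val.map (colDegree f) := by
  rw [rowW, filter_ofSupports_ne_zero, colW_ofSupports]

lemma Tcount_ofSupports (f : Fin L → Finset (Fin n)) :
    Tcount (ofSupports f) = #{j | ∀ i, j ∉ f i} := by
  simp only [Tcount, ← ofSupports_ne_zero_iff, not_not]

lemma colDegree_pos {f : Fin L → Finset (Fin n)} {i : Fin L} {j : Fin n} (h : j ∈ f i) :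
    0 < colDegree f j :=
  card_pos.mpr ⟨i, by simpa using h⟩

lemma Ucount_ofSupports {f : Fin L → Finset (Fin n)} (hf : f ∈ supportFamilies L n 3) :
    Ucount (ofSupports f) = #{i | soleCols f i = f i} := by
  refine congrArg card (filter_congr fun i _ => ?_)
  have h111 : ({1, 1, 1} : Multiset ℕ) = Multiset.replicate #(f i) 1 := by
    rw [mem_supportFamilies.mp hf i]; rfl
  rw [rowW_ofSupports, h111, map_val_eq_replicate_card_iff, soleCols, filter_eq_self]

lemma Vcount_ofSupports {f : Fin L → Finset (Fin n)} (hf : f ∈ supportFamilies L n 3) :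
    Vcount (ofSupports f) = #{i | #(soleCols f i) = 2} := by
  refine congrArg card (filter_congr fun i _ => ?_)
  have hcard : ((f i).val.map (colDegree f)).card = 3 := by
    simpa using mem_supportFamilies.mp hf i
  have h0 : 0 ∉ (f i).val.map (colDegree f) := by
    simpa using fun j hj => (colDegree_pos hj).ne'
  rw [rowW_ofSupports, Multiset.exists_two_le_eq_one_one_iff_count hcard h0,
    Multiset.count_map, soleCols]
  simp only [eq_comm (a := 1)]
  rfl

end SupportFamilies

section Counting

variable {L n k : ℕ}

lemma card_filter_forall_disjoint (t : Finset (Fin n)) :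
    #{f ∈ supportFamilies L n k | ∀ r, Disjoint (f r) t} = (n - #t).choose k ^ L := by
  have hfilter : {f ∈ supportFamilies L n k | ∀ r, Disjoint (f r) t}
      = Fintype.piFinset fun _ => tᶜ.powersetCard k := by
    ext f
    simp only [supportFamilies, mem_filter, Fintype.mem_piFinset, mem_powersetCard,
      subset_univ, true_and, subset_compl_iff_disjoint_right, ← forall_and, and_comm]
  simp [hfilter, card_compl]

lemma card_filter_eq_and_disjoint {S : Finset (Fin n)} (hS : #S = k) (i : Fin L)
    (t : Finset (Fin n)) :
    #{f ∈ supportFamilies L n k | f i = S ∧ ∀ r ≠ i, Disjoint (f r) t}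
      = (n - #t).choose k ^ (L - 1) := by
  have hfilter : {f ∈ supportFamilies L n k | f i = S ∧ ∀ r ≠ i, Disjoint (f r) t}
      = Fintype.piFinset (Function.update (fun _ => tᶜ.powersetCard k) i {S}) := by
    ext f
    simp only [supportFamilies, mem_filter, Fintype.mem_piFinset, mem_powersetCard,
      subset_univ, true_and]
    rw [Function.forall_update_iff (p := fun r s => f r ∈ s)]
    simp only [mem_singleton, mem_powersetCard, subset_compl_iff_disjoint_right]
    constructor
    · rintro ⟨hcard, hfi, hdisj⟩
      exact ⟨hfi, fun r hr => ⟨hdisj r hr, hcard r⟩⟩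
    · rintro ⟨hfi, hrest⟩
      refine ⟨fun r => ?_, hfi, fun r hr => (hrest r hr).1⟩
      by_cases hr : r = i
      · rw [hr, hfi, hS]
      · exact (hrest r hr).2
  rw [hfilter, Fintype.card_piFinset]
  simp only [Function.apply_update (fun _ => card), Finset.prod_update_of_mem (mem_univ i)]
  simp [card_compl, card_sdiff]

lemma colDegree_eq_one_iff {f : Fin L → Finset (Fin n)} {i : Fin L} {j : Fin n} (h : j ∈ f i) :
    colDegree f j = 1 ↔ ∀ r ≠ i, j ∉ f r := by
  rw [colDegree, card_eq_one_iff_existsUnique]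
  simp only [mem_filter, mem_univ, true_and]
  exact ⟨fun hu r hr hjr => hr (hu.unique hjr h),
    fun hi => ⟨i, h, fun r hjr => by_contra fun hr => hi r hr hjr⟩⟩

lemma subset_soleCols_iff {f : Fin L → Finset (Fin n)} {i : Fin L} {t : Finset (Fin n)}
    (ht : t ⊆ f i) : t ⊆ soleCols f i ↔ ∀ r ≠ i, Disjoint (f r) t := by
  have key : ∀ j ∈ t, j ∈ soleCols f i ↔ ∀ r ≠ i, j ∉ f r := fun j hj => by
    rw [soleCols, mem_filter, colDegree_eq_one_iff (ht hj), and_iff_right (ht hj)]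
  simp only [subset_iff, disjoint_right]
  exact ⟨fun h r hr j hj => (key j hj).1 (h hj) r hr,
    fun h j hj => (key j hj).2 fun r hr => h r hr hj⟩

lemma card_filter_subset_soleCols {S t : Finset (Fin n)} (hS : #S = k) (i : Fin L)
    (ht : t ⊆ S) :
    #{f ∈ supportFamilies L n k | f i = S ∧ t ⊆ soleCols f i}
      = (n - #t).choose k ^ (L - 1) := by
  rw [← card_filter_eq_and_disjoint hS i t]
  exact congrArg card (filter_congr fun f _ =>
    and_congr_right fun hfi => subset_soleCols_iff (hfi ▸ ht))

lemma card_filter_soleCols_eq {S T : Finset (Fin n)} (hS : #S = k) (i : Fin L) (hTS : T ⊆ S)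
    (hT : #T + 1 = k) :
    #{f ∈ supportFamilies L n k | f i = S ∧ soleCols f i = T}
      = (n - #T).choose k ^ (L - 1) - (n - k).choose k ^ (L - 1) := by
  have hdiff : {f ∈ supportFamilies L n k | f i = S ∧ soleCols f i = T}
      = {f ∈ supportFamilies L n k |
          (f i = S ∧ T ⊆ soleCols f i) ∧ ¬(f i = S ∧ S ⊆ soleCols f i)} :=
    filter_congr fun f _ => by
      constructor
      · rintro ⟨hfi, hsole⟩
        have := (eq_iff_subset_and_not_superset (hfi ▸ soleCols_subset f i) (hS ▸ hT)).1 hsole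
        exact ⟨⟨hfi, this.1⟩, fun h => this.2 h.2⟩
      · rintro ⟨⟨hfi, hT'⟩, hS'⟩
        exact ⟨hfi, (eq_iff_subset_and_not_superset (hfi ▸ soleCols_subset f i) (hS ▸ hT)).2
          ⟨hT', fun h => hS' ⟨hfi, h⟩⟩⟩
  rw [hdiff, card_filter_and_not_of_imp _ fun f _ => And.imp_right hTS.trans,
    card_filter_subset_soleCols hS i hTS, card_filter_subset_soleCols hS i subset_rfl, hS]

lemma card_filter_eq_sum_fiber (i : Fin L) (P : (Fin L → Finset (Fin n)) → Prop)
    [DecidablePred P] :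
    #{f ∈ supportFamilies L n k | P f}
      = ∑ S ∈ (univ : Finset (Fin n)).powersetCard k,
          #{f ∈ supportFamilies L n k | f i = S ∧ P f} := by
  rw [card_eq_sum_card_fiberwise (f := (· i)) fun f hf =>
    mem_powersetCard.mpr ⟨subset_univ _, mem_supportFamilies.mp (mem_filter.mp hf).1 i⟩]
  simp only [filter_filter, and_comm]

lemma card_filter_soleCols_eq_self (i : Fin L) :
    #{f ∈ supportFamilies L n k | soleCols f i = f i}
      = n.choose k * (n - k).choose k ^ (L - 1) := by
  have hfiber : ∀ S ∈ (univ : Finset (Fin n)).powersetCard k,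
      #{f ∈ supportFamilies L n k | f i = S ∧ soleCols f i = f i}
        = (n - k).choose k ^ (L - 1) := by
    intro S hS
    have hS : #S = k := (mem_powersetCard.mp hS).2
    have hsame : {f ∈ supportFamilies L n k | f i = S ∧ soleCols f i = f i}
        = {f ∈ supportFamilies L n k | f i = S ∧ S ⊆ soleCols f i} :=
      filter_congr fun f _ => and_congr_right fun hfi => by
        rw [← hfi]; exact ⟨fun h => h.ge, (soleCols_subset f i).antisymm⟩
    rw [hsame, card_filter_subset_soleCols hS i subset_rfl, hS]
  rw [card_filter_eq_sum_fiber i, sum_congr rfl hfiber, sum_const, card_powersetCard, card_univ,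
    Fintype.card_fin, smul_eq_mul]

lemma card_filter_card_soleCols_eq_pred (hk : 0 < k) (i : Fin L) :
    #{f ∈ supportFamilies L n k | #(soleCols f i) = k - 1}
      = n.choose k * (k * ((n - (k - 1)).choose k ^ (L - 1) - (n - k).choose k ^ (L - 1))) := by
  have hfiber : ∀ S ∈ (univ : Finset (Fin n)).powersetCard k,
      #{f ∈ supportFamilies L n k | f i = S ∧ #(soleCols f i) = k - 1}
        = k * ((n - (k - 1)).choose k ^ (L - 1) - (n - k).choose k ^ (L - 1)) := by
    intro S hS
    have hS : #S = k := (mem_powersetCard.mp hS).2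
    have hsoleFiber : ∀ T ∈ S.powersetCard (k - 1),
        #{f ∈ {f ∈ supportFamilies L n k | f i = S ∧ #(soleCols f i) = k - 1} |
            soleCols f i = T}
          = (n - (k - 1)).choose k ^ (L - 1) - (n - k).choose k ^ (L - 1) := by
      intro T hT
      obtain ⟨hTS, hTcard⟩ := mem_powersetCard.mp hT
      rw [filter_filter, ← hTcard, ← card_filter_soleCols_eq hS i hTS (by omega)]
      exact congrArg card (filter_congr fun f _ => by
        constructor
        · rintro ⟨⟨hfi, -⟩, hsole⟩
          exact ⟨hfi, hsole⟩
        · rintro ⟨hfi, hsole⟩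
          exact ⟨⟨hfi, by rw [hsole, hTcard]⟩, hsole⟩)
    rw [card_eq_sum_card_fiberwise (f := (soleCols · i)) (t := S.powersetCard (k - 1))
        fun f hf => ?_,
      sum_congr rfl hsoleFiber, sum_const, card_powersetCard, hS,
      Nat.choose_symm_of_eq_add (show k = k - 1 + 1 by omega), Nat.choose_one_right, smul_eq_mul]
    obtain ⟨-, hfi, hcard⟩ := mem_filter.mp hf
    exact mem_powersetCard.mpr ⟨hfi ▸ soleCols_subset f i, hcard⟩
  rw [card_filter_eq_sum_fiber i, sum_congr rfl hfiber, sum_const, card_powersetCard, card_univ,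
    Fintype.card_fin, smul_eq_mul]

end Counting

lemma sum_Tcount_Mset (L n k : ℕ) :
    ∑ A ∈ Mset L n k, Tcount A = n * (n - 1).choose k ^ L := by
  rw [Mset_eq_map_ofSupports, sum_map]
  simp only [Function.Embedding.coeFn_mk, Tcount_ofSupports]
  rw [sum_card_filter_comm (r := fun (f : Fin L → Finset (Fin n)) j => ∀ i, j ∉ f i)]
  have hcol : ∀ j : Fin n,
      #{f ∈ supportFamilies L n k | ∀ i, j ∉ f i} = (n - 1).choose k ^ L := fun j => by
    simpa [disjoint_singleton_right] using card_filter_forall_disjoint (L := L) (k := k) {j}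
  simp only [hcol, sum_const, card_univ, Fintype.card_fin, smul_eq_mul]

lemma sum_Ucount_Mset (L n : ℕ) :
    ∑ A ∈ Mset L n 3, Ucount A = L * n.choose 3 * (n - 3).choose 3 ^ (L - 1) := by
  rw [Mset_eq_map_ofSupports, sum_map]
  simp only [Function.Embedding.coeFn_mk]
  rw [sum_congr rfl fun f hf => Ucount_ofSupports hf,
    sum_card_filter_comm (r := fun f i => soleCols f i = f i)]
  simp only [card_filter_soleCols_eq_self, sum_const, card_univ, Fintype.card_fin,
    smul_eq_mul, mul_assoc]

lemma sum_Vcount_Mset (L n : ℕ) :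
    ∑ A ∈ Mset L n 3, Vcount A
      = L * (n.choose 3 * (3 * ((n - 2).choose 3 ^ (L - 1) - (n - 3).choose 3 ^ (L - 1)))) := by
  rw [Mset_eq_map_ofSupports, sum_map]
  simp only [Function.Embedding.coeFn_mk]
  rw [sum_congr rfl fun f hf => Vcount_ofSupports hf,
    sum_card_filter_comm (r := fun f i => #(soleCols f i) = 2)]
  simp only [card_filter_card_soleCols_eq_pred (k := 3) three_pos, sum_const,
    card_univ, Fintype.card_fin, smul_eq_mul]

lemma choose_three_mul_three (n : ℕ) : (n.choose 3 : ℤ) * 3 = n.choose 2 * ((n : ℤ) - 2) := by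
  rcases lt_or_ge n 2 with hn | hn
  · interval_cases n <;> simp [Nat.choose_eq_zero_of_lt]
  · have := Nat.choose_succ_right_eq n 2
    exact_mod_cast this

theorem sum_TUV_eq_general (n L : ℕ) :
    (∑ A ∈ Mset L n 3, (Tcount A : ℤ)) = (n : ℤ) * ((n - 1).choose 3 : ℤ) ^ L ∧
    (∑ A ∈ Mset L n 3, (Ucount A : ℤ)) =
      (L : ℤ) * (n.choose 3 : ℤ) * ((n - 3).choose 3 : ℤ) ^ (L - 1) ∧
    (∑ A ∈ Mset L n 3, (Vcount A : ℤ)) =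
      (L : ℤ) * (n.choose 2 : ℤ) * ((n : ℤ) - 2) *
        (((n - 2).choose 3 : ℤ) ^ (L - 1) - ((n - 3).choose 3 : ℤ) ^ (L - 1)) := by
  have hmono : (n - 3).choose 3 ^ (L - 1) ≤ (n - 2).choose 3 ^ (L - 1) :=
    Nat.pow_le_pow_left (Nat.choose_le_choose 3 (by omega)) _
  refine ⟨?_, ?_, ?_⟩
  · exact_mod_cast sum_Tcount_Mset L n 3
  · exact_mod_cast sum_Ucount_Mset L n
  · rw [← Nat.cast_sum, sum_Vcount_Mset]
    push_cast [hmono]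
    linear_combination
      (L : ℤ) * (((n - 2).choose 3 : ℤ) ^ (L - 1) - ((n - 3).choose 3 : ℤ) ^ (L - 1)) *
        choose_three_mul_three n

/-- Exact first-moment identities for `T`, `U`, `V` over `M_{L,n,3}`. -/
theorem sum_TUV_eq (n L : ℕ) (hn : 6 ≤ n) (hL : 1 ≤ L) :
    (∑ A ∈ Mset L n 3, (Tcount A : ℤ)) = (n : ℤ) * ((n - 1).choose 3 : ℤ) ^ L ∧
    (∑ A ∈ Mset L n 3, (Ucount A : ℤ)) =
      (L : ℤ) * (n.choose 3 : ℤ) * ((n - 3).choose 3 : ℤ) ^ (L - 1) ∧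
    (∑ A ∈ Mset L n 3, (Vcount A : ℤ)) =
      (L : ℤ) * (n.choose 2 : ℤ) * ((n : ℤ) - 2) *
        (((n - 2).choose 3 : ℤ) ^ (L - 1) - ((n - 3).choose 3 : ℤ) ^ (L - 1)) :=
  sum_TUV_eq_general n L
end
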